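/- arXiv:2401.07025 — 4 statements merged into one kernel-verified Lean document; each statement's English description precedes it below -/
import Mathlib

section
/- Let μ be a Keisler measure over a small model M. Then μ extends to a global M-definable Keisler measure if and only if μ has a unique global heir over M. -/
namespace KeislerPaper

open FirstOrder FirstOrder.Language Set MeasureTheory
open scoped ENNReal Classical

universe u v

/-! ### Finitely additive probability measures on a distinguished collection of sets.

A Keisler measure over a parameter set `A` is represented as a real-valued set-function
which is a finitely additive probability measure on the collection of `A`-definable sets
(its values outside the distinguished collection are irrelevant, and all notions below
only refer to values on the relevant collections). -/

structure FAM (X : Type u) (D : Set (Set X)) : Type u where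
  val : Set X → ℝ
  nonneg : ∀ s ∈ D, 0 ≤ val s
  isProb : val Set.univ = 1
  additive : ∀ s t : Set X, s ∈ D → t ∈ D → Disjoint s t → val (s ∪ t) = val s + val t

/-- Two set-functions agree on a collection of sets. -/
def agreeOn {X : Type u} (D : Set (Set X)) (f g : Set X → ℝ) : Prop :=
  ∀ s ∈ D, f s = g s

/-- A measure is (the measure associated to) a type when it is `0-1`-valued. -/
def IsTypeOn {X : Type u} (D : Set (Set X)) (f : Set X → ℝ) : Prop :=
  ∀ s ∈ D, f s = 0 ∨ f s = 1

/-- The `D₀`-restriction of `f` has a unique extension to a finitely additive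
probability measure on the collection `D₁`: this is smoothness of the restriction of `f`
to `D₀` relative to `D₁`. -/
def SmoothOn {X : Type u} (D₀ D₁ : Set (Set X)) (f : Set X → ℝ) : Prop :=
  (∃ ν : FAM X D₁, agreeOn D₀ ν.val f) ∧
    ∀ ν₁ ν₂ : FAM X D₁, agreeOn D₀ ν₁.val f → agreeOn D₀ ν₂.val f →
      agreeOn D₁ ν₁.val ν₂.val

/-- The Dirac measure at a point (the measure associated to a realized type). -/
noncomputable def diracF {X : Type u} (D : Set (Set X)) (x : X) : FAM X D where
  val s := if x ∈ s then 1 else 0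
  nonneg s _ := by by_cases h : x ∈ s <;> simp [h]
  isProb := by simp
  additive s t _ _ hd := by
    by_cases hs : x ∈ s
    · have ht : x ∉ t := fun ht => Set.disjoint_left.mp hd hs ht
      simp [Set.mem_union, hs, ht]
    · by_cases ht : x ∈ t <;> simp [Set.mem_union, hs, ht]

/-- Convex combination `t·μ + (1-t)·ν` of two finitely additive measures. -/
noncomputable def FAM.mix {X : Type u} {D : Set (Set X)} (t : ℝ) (h0 : 0 ≤ t) (h1 : t ≤ 1)
    (μ ν : FAM X D) : FAM X D where
  val s := t * μ.val s + (1 - t) * ν.val s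
  nonneg s hs := add_nonneg (mul_nonneg h0 (μ.nonneg s hs))
    (mul_nonneg (by linarith) (ν.nonneg s hs))
  isProb := by
    show t * μ.val Set.univ + (1 - t) * ν.val Set.univ = 1
    rw [μ.isProb, ν.isProb]; ring
  additive s s' hs hs' hd := by
    show t * μ.val (s ∪ s') + (1 - t) * ν.val (s ∪ s') =
      t * μ.val s + (1 - t) * ν.val s + (t * μ.val s' + (1 - t) * ν.val s')
    rw [μ.additive s s' hs hs' hd, ν.additive s s' hs hs' hd]; ring

/-! ### Keisler measures -/

/-- The collection of `A`-definable subsets of `α → U`. -/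
def Dset (L : FirstOrder.Language.{u, u}) {U : Type u} [L.Structure U] (A : Set U)
    (α : Type u) : Set (Set (α → U)) :=
  {s | A.Definable L s}

/-- A Keisler measure over the parameter set `A`, in the variable(s) `α`:
a finitely additive probability measure on the Boolean algebra of `A`-definable sets. -/
abbrev KMeasure (L : FirstOrder.Language.{u, u}) {U : Type u} [L.Structure U] (A : Set U)
    (α : Type u) : Type u :=
  FAM (α → U) (Dset L A α)

/-- The set `φ(U; b)` defined by a formula `φ(x; y)` with the parameters `b`. -/
def defFam {U : Type u} {L' : FirstOrder.Language.{u, u}} [L'.Structure U] {α : Type u}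
    {m : ℕ} (φ : L'.Formula (α ⊕ Fin m)) (b : Fin m → U) : Set (α → U) :=
  {a | φ.Realize (Sum.elim a b)}

/-- `b ≡_A b'` : the tuples `b` and `b'` have the same type over `A`. -/
def SameTypeOver (L : FirstOrder.Language.{u, u}) {U : Type u} [L.Structure U] (A : Set U)
    {m : ℕ} (b b' : Fin m → U) : Prop :=
  ∀ φ : (L[[A]]).Formula (Fin m), φ.Realize b ↔ φ.Realize b'

/-- `f` (the values of a global Keisler measure) is invariant over `Mset`. -/
def InvariantOn (L : FirstOrder.Language.{u, u}) {U : Type u} [L.Structure U] {α : Type u}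
    (f : Set (α → U) → ℝ) (Mset : Set U) : Prop :=
  ∀ (m : ℕ) (φ : (L[[Mset]]).Formula (α ⊕ Fin m)) (b b' : Fin m → U),
    SameTypeOver L Mset b b' → f (defFam φ b) = f (defFam φ b')

/-- A measure (given by its values `f` on the collection `D`) is finitely satisfiable in
`Mset`: every set in `D` of positive measure contains a tuple from `Mset`. -/
def FinSatIn {U : Type u} {α : Type u} (D : Set (Set (α → U))) (f : Set (α → U) → ℝ)
    (Mset : Set U) : Prop :=
  ∀ s ∈ D, 0 < f s → ∃ a ∈ s, ∀ i, a i ∈ Mset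

/-- A global Keisler measure (given by its values `f`) is definable over `Mset`:
it is `Mset`-invariant and for every formula `φ(x;y)` the induced map on `S_y(Mset)` is
continuous, i.e. the sets `{b : μ(φ(x;b)) < r}` and `{b : μ(φ(x;b)) > r}` are open in the
`Mset`-logic topology. -/
def DefinableOver (L : FirstOrder.Language.{u, u}) {U : Type u} [L.Structure U] {α : Type u}
    (f : Set (α → U) → ℝ) (Mset : Set U) : Prop :=
  InvariantOn L f Mset ∧
    ∀ (m : ℕ) (φ : L.Formula (α ⊕ Fin m)) (r : ℝ),
      (∀ b : Fin m → U, f (defFam φ b) < r →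
        ∃ ψ : (L[[Mset]]).Formula (Fin m), ψ.Realize b ∧
          ∀ b' : Fin m → U, ψ.Realize b' → f (defFam φ b') < r) ∧
      (∀ b : Fin m → U, r < f (defFam φ b) →
        ∃ ψ : (L[[Mset]]).Formula (Fin m), ψ.Realize b ∧
          ∀ b' : Fin m → U, ψ.Realize b' → r < f (defFam φ b'))

/-! ### NIP -/

/-- A formula `φ(x; y)` has the independence property (in `U`). -/
def HasIP {L : FirstOrder.Language.{u, u}} (U : Type u) [L.Structure U] {α : Type u}
    {β : Type v} (φ : L.Formula (α ⊕ β)) : Prop :=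
  ∃ (a : ℕ → α → U) (c : Set ℕ → β → U),
    ∀ (i : ℕ) (S : Set ℕ), φ.Realize (Sum.elim (a i) (c S)) ↔ i ∈ S

/-- The (complete theory of the) structure `U` is NIP: no formula has the independence
property. -/
def TheoryNIP (L : FirstOrder.Language.{u, u}) (U : Type u) [L.Structure U] : Prop :=
  ∀ (α β : Type u) (φ : L.Formula (α ⊕ β)), ¬ HasIP U φ

/-! ### Models, saturation, monster model -/

/-- `S` is (the underlying set of) an elementary submodel of `U`, via the Tarski–Vaught
criterion. -/
def IsElemSubset (L' : FirstOrder.Language.{u, u}) (U : Type u) [L'.Structure U]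
    (S : Set U) : Prop :=
  S.Nonempty ∧
    ∀ (m : ℕ) (φ : L'.Formula (Fin m ⊕ Fin 1)) (b : Fin m → U), (∀ i, b i ∈ S) →
      (∃ a : Fin 1 → U, φ.Realize (Sum.elim b a)) →
      ∃ a : Fin 1 → U, (∀ i, a i ∈ S) ∧ φ.Realize (Sum.elim b a)

/-- The submodel (with underlying set) `S` of `U` is `κ`-saturated: every type over a
subset `A ⊆ S` with `|A| < κ` which is finitely satisfiable in `S` is realized in `S`. -/
def SaturatedIn (L' : FirstOrder.Language.{u, u}) (U : Type u) [L'.Structure U] (S : Set U)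
    (κ : Cardinal.{u}) : Prop :=
  ∀ A : Set U, A ⊆ S → Cardinal.mk A < κ →
    ∀ Φ : Set ((L'[[A]]).Formula (Fin 1)),
      (∀ Φ₀ : Finset ((L'[[A]]).Formula (Fin 1)), ↑Φ₀ ⊆ Φ →
        ∃ b : Fin 1 → U, (∀ i, b i ∈ S) ∧ ∀ φ ∈ Φ₀, Formula.Realize φ b) →
      ∃ b : Fin 1 → U, (∀ i, b i ∈ S) ∧ ∀ φ ∈ Φ, Formula.Realize φ b

/-- `A` is small with respect to the degree of saturation `κ` of the monster model. -/
def SmallSet (L : FirstOrder.Language.{u, u}) {U : Type u} (κ : Cardinal.{u}) (A : Set U) :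
    Prop :=
  Cardinal.mk A + L.card + Cardinal.aleph0 < κ

/-- `Mset ≺⁺ Nset` : `Nset` is a `(|Mset| + |T|)⁺`-saturated elementary extension. -/
def PlusExt (L' : FirstOrder.Language.{u, u}) (U : Type u) [L'.Structure U]
    (Mset Nset : Set U) : Prop :=
  Mset ⊆ Nset ∧ IsElemSubset L' U Nset ∧
    SaturatedIn L' U Nset (Order.succ (Cardinal.mk Mset + L'.card + Cardinal.aleph0))

/-- `U` is a monster model of degree `κ`: it is `κ`-saturated and strongly
`κ`-homogeneous. -/
def IsMonster (L : FirstOrder.Language.{u, u}) (U : Type u) [L.Structure U]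
    (κ : Cardinal.{u}) : Prop :=
  (∀ A : Set U, Cardinal.mk A < κ →
    ∀ Φ : Set ((L[[A]]).Formula (Fin 1)),
      (∀ Φ₀ : Finset ((L[[A]]).Formula (Fin 1)), ↑Φ₀ ⊆ Φ →
        ∃ b : Fin 1 → U, ∀ φ ∈ Φ₀, Formula.Realize φ b) →
      ∃ b : Fin 1 → U, ∀ φ ∈ Φ, Formula.Realize φ b) ∧
  ∀ (β : Type u), Cardinal.mk β < κ → ∀ a a' : β → U,
    (∀ φ : L.Formula β, φ.Realize a ↔ φ.Realize a') →
    ∃ σ : U ≃[L] U, ∀ i, σ (a i) = a' i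

/-! ### Heirs -/

/-- `f` (the values of a measure over `Bset ⊇ Mset`) is an heir over `Mset`. -/
def IsHeir (L : FirstOrder.Language.{u, u}) {U : Type u} [L.Structure U] {α : Type u}
    (f : Set (α → U) → ℝ) (Mset Bset : Set U) : Prop :=
  ∀ ε : ℝ, 0 < ε → ∀ (n m : ℕ) (φ : Fin n → (L[[Mset]]).Formula (α ⊕ Fin m))
    (b : Fin m → U), (∀ j, b j ∈ Bset) →
    ∃ d : Fin m → U, (∀ j, d j ∈ Mset) ∧
      ∀ i : Fin n, |f (defFam (φ i) b) - f (defFam (φ i) d)| < ε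

/-! ### Amalgams and products -/

/-- The cylinder over the first block of variables. -/
def cylL {U : Type u} {α : Type u} (β : Type u) (s : Set (α → U)) : Set ((α ⊕ β) → U) :=
  {h | (fun a => h (Sum.inl a)) ∈ s}

/-- The cylinder over the second block of variables. -/
def cylR {U : Type u} (α : Type u) {β : Type u} (t : Set (β → U)) : Set ((α ⊕ β) → U) :=
  {h | (fun b => h (Sum.inr b)) ∈ t}

/-- `w` (the values of a measure in the variables `x y`) is a separated amalgam over `A` of
`f` (in variable `x`) and `g` (in variable `y`): `w(φ(x) ∧ ψ(y)) = f(φ(x))·g(ψ(y))`. -/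
def SepAmalgamOn (L : FirstOrder.Language.{u, u}) {U : Type u} [L.Structure U]
    {α β : Type u} (A : Set U) (w : Set ((α ⊕ β) → U) → ℝ) (f : Set (α → U) → ℝ)
    (g : Set (β → U) → ℝ) : Prop :=
  ∀ (s : Set (α → U)) (t : Set (β → U)), A.Definable L s → A.Definable L t →
    w (cylL β s ∩ cylR α t) = f s * g t

/-! ### The product of invariant measures (via integration on the type space).

For a global measure `ν` and a small model `N`, the regular Borel extension of `ν|N` to
the type space `S_y(N)` is encoded by the Carathéodory outer measure generated by `ν` on
the `N`-definable sets, and integrals against it are defined by the layer-cake formula. -/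

/-- The outer measure on `β → U` generated by the values `νv` on `Nset`-definable sets. -/
noncomputable def outerOf (L : FirstOrder.Language.{u, u}) {U : Type u} [L.Structure U]
    {β : Type u} (νv : Set (β → U) → ℝ) (Nset : Set U) : Set (β → U) → ℝ≥0∞ := fun E =>
  ⨅ (D : ℕ → Set (β → U)) (_ : ∀ n, Nset.Definable L (D n)) (_ : E ⊆ ⋃ n, D n),
    ∑' n, ENNReal.ofReal (νv (D n))

/-- The integral `∫_{S_y(N)} f dν`, via the layer-cake formula. -/
noncomputable def ointegral (L : FirstOrder.Language.{u, u}) {U : Type u} [L.Structure U]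
    {β : Type u} (νv : Set (β → U) → ℝ) (Nset : Set U) (f : (β → U) → ℝ) : ℝ :=
  (∫⁻ t in Set.Ioi (0 : ℝ), outerOf L νv Nset {b | t < f b}).toReal

/-- `ω = μ(x) ⊗ ν(y)` : for every set `s` definable over a small model `Nset ⊇ Mset`,
`ω(s) = ∫ μ(s_b) dν(b)`, the integral over `S_y(Nset)` of the `μ`-measures of the fibers.
(Here `μ` is the `Mset`-invariant factor.) -/
def IsTensorL (L : FirstOrder.Language.{u, u}) {U : Type u} [L.Structure U] {α β : Type u}
    (Mset : Set U) (κ : Cardinal.{u}) (μ : KMeasure L (Set.univ : Set U) α)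
    (ν : KMeasure L (Set.univ : Set U) β) (ω : KMeasure L (Set.univ : Set U) (α ⊕ β)) :
    Prop :=
  ∀ (s : Set ((α ⊕ β) → U)) (Nset : Set U), IsElemSubset L U Nset → Mset ⊆ Nset →
    SmallSet L κ Nset → Nset.Definable L s →
    ω.val s = ointegral L ν.val Nset fun b => μ.val {a | Sum.elim a b ∈ s}

/-- `ω = ν(y) ⊗ μ(x)` where `ω` is a measure in the variables `(x, y)` (the first
block of variables is that of `μ`, the second that of the `Mset`-invariant factor `ν`). -/
def IsTensorR (L : FirstOrder.Language.{u, u}) {U : Type u} [L.Structure U] {α β : Type u}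
    (Mset : Set U) (κ : Cardinal.{u}) (ν : KMeasure L (Set.univ : Set U) β)
    (μ : KMeasure L (Set.univ : Set U) α) (ω : KMeasure L (Set.univ : Set U) (α ⊕ β)) :
    Prop :=
  ∀ (s : Set ((α ⊕ β) → U)) (Nset : Set U), IsElemSubset L U Nset → Mset ⊆ Nset →
    SmallSet L κ Nset → Nset.Definable L s →
    ω.val s = ointegral L μ.val Nset fun a => ν.val {b | Sum.elim a b ∈ s}

/-! ### Pairs of models: the language `L_P = L ∪ {P}` -/

/-- The language with a single unary predicate `P`. -/
def pLang : FirstOrder.Language.{u, u} where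
  Functions := fun _ => PEmpty
  Relations := fun n =>
    match n with
    | 1 => PUnit
    | _ => PEmpty

/-- The `pLang`-structure on `U` in which `P` is interpreted by the subset `PU`. -/
def pStruct {U : Type u} (PU : Set U) : pLang.{u}.Structure U where
  funMap := fun f _ => PEmpty.elim f
  RelMap := fun {n} r x =>
    match n, r, x with
    | 1, _, x => x 0 ∈ PU
    | 0, r, _ => PEmpty.elim r
    | _ + 2, r, _ => PEmpty.elim r

/-- The language `L_P`, obtained from `L` by adding a new unary predicate `P`. -/
def LP (L : FirstOrder.Language.{u, u}) : FirstOrder.Language.{u, u} :=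
  L.sum pLang

/-- The `L_P`-structure `(U, PU)` on `U`, where `P` is interpreted by `PU`. -/
def pairStr (L : FirstOrder.Language.{u, u}) {U : Type u} [L.Structure U] (PU : Set U) :
    (LP L).Structure U :=
  letI : pLang.{u}.Structure U := pStruct PU
  FirstOrder.Language.sumStructure L pLang U

/-- `S` is an elementary submodel of the pair `(U, PU)` in the language `L_P`. -/
def PIsElemSubset (L : FirstOrder.Language.{u, u}) {U : Type u} [L.Structure U]
    (PU S : Set U) : Prop :=
  @IsElemSubset (LP L) U (pairStr L PU) S

/-- The pair `Mset ≺⁺ Nset` inside `(U, PU)`, in the language `L_P`. -/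
def PairPlusExt (L : FirstOrder.Language.{u, u}) {U : Type u} [L.Structure U]
    (PU Mset Nset : Set U) : Prop :=
  @PlusExt (LP L) U (pairStr L PU) Mset Nset

/-- `P(x)` : the set of tuples all of whose coordinates satisfy the predicate `P`. -/
def PSetC {U : Type u} (PU : Set U) (α : Type u) : Set (α → U) :=
  {a | ∀ i, a i ∈ PU}

/-- The collection of `Δ(A)`-definable sets, where `Δ` is the Boolean algebra of formulas
generated by `L`-formulas together with `P(x)`: these are exactly the sets
`(s₁ ∩ P) ∪ (s₂ \ P)` with `s₁, s₂` being `A`-definable `L`-sets. -/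
def PDset (L : FirstOrder.Language.{u, u}) {U : Type u} [L.Structure U] (PU A : Set U)
    (α : Type u) : Set (Set (α → U)) :=
  {s | ∃ s₁ s₂ : Set (α → U), A.Definable L s₁ ∧ A.Definable L s₂ ∧
    s = (s₁ ∩ PSetC PU α) ∪ (s₂ \ PSetC PU α)}

/-! ### The canonical retraction -/

/-- The defining relation of the retraction `F̃_M` of the paper: `g` (the values of
`F̃_M(μ)`) agrees over `M'` with (the `L`-reduct of) every global `Δ`-measure extending
`μ|N` and giving `P(x)` measure `1`. Here `f` gives the values of `μ`, and the ambient
data is `M ≺⁺ M'`, `(M', M) ≺⁺ (N', N)`, with `(U, PU)` an elementary extension of the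
pair `(N', N)`. -/
def TildeFMRel (L : FirstOrder.Language.{u, u}) {U : Type u} [L.Structure U] {α : Type u}
    (M'set Nset PU : Set U) (f g : Set (α → U) → ℝ) : Prop :=
  ∀ ν : FAM (α → U) (PDset L PU Set.univ α),
    agreeOn (Dset L Nset α) ν.val f → ν.val (PSetC PU α) = 1 →
    agreeOn (Dset L M'set α) g ν.val

/-- `F` is the canonical retraction `F_M` (of Chernikov–Pillay–Simon) from the space of
global `Mset`-invariant Keisler measures onto the space of global measures finitely
satisfiable in `Mset`: it maps invariant measures to finitely satisfiable ones, fixes the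
finitely satisfiable ones, satisfies `F(μ)|M = μ|M`, is affine and continuous, and agrees
on `Mset`-invariant types with Simon's canonical retraction (constructed via the pair
`(M', Mset) ≺⁺ (N', Nset)`, elementarily embedded in `(U, PU)`). -/
def IsCPS (L : FirstOrder.Language.{u, u}) {U : Type u} [L.Structure U]
    (Mset M'set Nset PU : Set U)
    (F : ∀ γ : Type u, KMeasure L (Set.univ : Set U) γ → KMeasure L (Set.univ : Set U) γ) :
    Prop :=
  (∀ (γ : Type u) (μ : KMeasure L (Set.univ : Set U) γ), InvariantOn L μ.val Mset →
    InvariantOn L (F γ μ).val Mset ∧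
      FinSatIn (Dset L (Set.univ : Set U) γ) (F γ μ).val Mset ∧
      agreeOn (Dset L Mset γ) (F γ μ).val μ.val) ∧
  (∀ (γ : Type u) (μ : KMeasure L (Set.univ : Set U) γ), InvariantOn L μ.val Mset →
    FinSatIn (Dset L (Set.univ : Set U) γ) μ.val Mset →
    agreeOn (Dset L (Set.univ : Set U) γ) (F γ μ).val μ.val) ∧
  (∀ (γ : Type u) (μ ν : KMeasure L (Set.univ : Set U) γ), InvariantOn L μ.val Mset →
    InvariantOn L ν.val Mset → ∀ (t : ℝ) (h0 : 0 ≤ t) (h1 : t ≤ 1),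
      agreeOn (Dset L (Set.univ : Set U) γ) (F γ (FAM.mix t h0 h1 μ ν)).val
        (FAM.mix t h0 h1 (F γ μ) (F γ ν)).val) ∧
  (∀ (γ : Type u) (μ : KMeasure L (Set.univ : Set U) γ), InvariantOn L μ.val Mset →
    ∀ s ∈ Dset L (Set.univ : Set U) γ, ∀ ε : ℝ, 0 < ε →
      ∃ (k : ℕ) (ts : Fin k → Set (γ → U)) (δ : ℝ), 0 < δ ∧
        (∀ i, (Set.univ : Set U).Definable L (ts i)) ∧
        ∀ ν : KMeasure L (Set.univ : Set U) γ, InvariantOn L ν.val Mset →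
          (∀ i, |ν.val (ts i) - μ.val (ts i)| < δ) →
          |(F γ ν).val s - (F γ μ).val s| < ε) ∧
  (∀ (γ : Type u) (p : KMeasure L (Set.univ : Set U) γ), InvariantOn L p.val Mset →
    IsTypeOn (Dset L (Set.univ : Set U) γ) p.val →
    InvariantOn L (F γ p).val Mset ∧ TildeFMRel L M'set Nset PU p.val (F γ p).val)

/-! ### Indiscernible measures and products of smooth measures -/

/-- The cylinder in the `i`-th copy of the variables, inside an `ω`-indexed product. -/
def cylAt {U : Type u} {α : Type u} (i : ℕ) (s : Set (α → U)) : Set ((ℕ × α) → U) :=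
  {h | (fun a => h (i, a)) ∈ s}

/-- A measure in the variables `(x_i)_{i < ω}` (given by its values `f`) is indiscernible
over `Mset`. -/
def IndiscernibleOver (L : FirstOrder.Language.{u, u}) {U : Type u} [L.Structure U]
    {α : Type u} (f : Set ((ℕ × α) → U) → ℝ) (Mset : Set U) : Prop :=
  ∀ (n : ℕ) (φ : (L[[Mset]]).Formula (Fin n × α)) (i j : Fin n → ℕ),
    StrictMono i → StrictMono j →
    f {h | φ.Realize fun p => h (i p.1, p.2)} = f {h | φ.Realize fun p => h (j p.1, p.2)}

/-! ### Local (Δ-) measures -/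

/-- The collection of instances, with parameters in `A`, of the formulas in the family
`Δ` (a family of formulas `φ(x; y)` in the object variables `α`). -/
def DeltaSet (L : FirstOrder.Language.{u, u}) {U : Type u} [L.Structure U] {α : Type u}
    (Δ : ∀ m : ℕ, Set (L.Formula (α ⊕ Fin m))) (A : Set U) : Set (Set (α → U)) :=
  {s | ∃ (m : ℕ) (φ : L.Formula (α ⊕ Fin m)) (b : Fin m → U),
    φ ∈ Δ m ∧ (∀ j, b j ∈ A) ∧ s = defFam φ b}

/-- A collection of sets is a Boolean algebra of sets. -/
def IsBoolAlg {X : Type u} (D : Set (Set X)) : Prop :=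
  Set.univ ∈ D ∧ (∀ s ∈ D, sᶜ ∈ D) ∧ ∀ s ∈ D, ∀ t ∈ D, s ∩ t ∈ D

/-- The operation `φ(x, y) ↦ (∃ y) φ(x, y)` on subsets of the `xy`-variable space. -/
def exY {U : Type u} {α β : Type u} (s : Set ((α ⊕ β) → U)) : Set ((α ⊕ β) → U) :=
  {h | ∃ b : β → U, Sum.elim (fun a => h (Sum.inl a)) b ∈ s}

/-- A global Keisler measure (given by its values `f`) is smooth: its restriction to some
small model has a unique extension to a global Keisler measure. -/
def GSmooth (L : FirstOrder.Language.{u, u}) {U : Type u} [L.Structure U]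
    (κ : Cardinal.{u}) {α : Type u} (f : Set (α → U) → ℝ) : Prop :=
  ∃ M₀ : Set U, IsElemSubset L U M₀ ∧ SmallSet L κ M₀ ∧
    SmoothOn (Dset L M₀ α) (Dset L (Set.univ : Set U) α) f


/-!
A definable global extension `ν` of `μ` is an heir: for finitely many instances `χᵢ(x; b)`,
the Tarski–Vaught test finds `d ∈ M` in the neighbourhood of `tp(b/M)` on which every
`ν(χᵢ(x; ·))` is almost constant. Any heir `ν₁` of `μ` agrees with `ν`: the heir property
compares `ν₁(χ(x; e))` with `ν₁(χ(x; d)) = μ(χ(x; d)) = ν(χ(x; d))` for some `d ∈ M` in such a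
neighbourhood of `tp(e/M)`.

Conversely, let `ν` be the unique global heir. The global heirs of `μ` are the points of the
compact space `[0,1]^{sets}` satisfying a family of closed conditions. If `ν(χ(x; b)) < r`
but every formula of `tp(b/M)` had a realization `b'` with `r ≤ ν(χ(x; b'))`, then for every
finite set of conditions some parameter substitution `z : U → U` preserving them, with
`z ∘ b = b'`, would transport `ν` to a solution of these conditions taking a value `≥ r` at
`χ(x; b)`; by compactness this gives a second heir. Hence `{q : ν(χ(x; q)) < r}` is open,
`{q : ν(χ(x; q)) > r}` is open by complementation, and `M`-invariance follows as well.
-/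

section Formulas

variable {L : FirstOrder.Language.{u, u}} {U : Type u} [L.Structure U] {α : Type u} {β : Type*}

/-- `defFam φ b` is the special case `β = Fin m`. -/
def fiber {L' : FirstOrder.Language.{u, u}} [L'.Structure U] {γ : Type*}
    (F : L'.Formula (γ ⊕ β)) (z : β → U) : Set (γ → U) :=
  {a | F.Realize (Sum.elim a z)}

theorem fiber_relabel_sumMap {L' : FirstOrder.Language.{u, u}} [L'.Structure U] {m : ℕ}
    (χ : L'.Formula (α ⊕ Fin m)) (e : Fin m → β) (z : β → U) :
    fiber (χ.relabel (Sum.map id e)) z = defFam χ (z ∘ e) := by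
  ext a
  simp [fiber, defFam, Formula.realize_relabel, Sum.elim_comp_map]

theorem fiber_sup {L' : FirstOrder.Language.{u, u}} [L'.Structure U] (F G : L'.Formula (α ⊕ β))
    (z : β → U) : fiber (F ⊔ G) z = fiber F z ∪ fiber G z := by
  ext
  simp [fiber]

theorem fiber_inf {L' : FirstOrder.Language.{u, u}} [L'.Structure U] (F G : L'.Formula (α ⊕ β))
    (z : β → U) : fiber (F ⊓ G) z = fiber F z ∩ fiber G z := by
  ext
  simp [fiber]

theorem fiber_bot {L' : FirstOrder.Language.{u, u}} [L'.Structure U] (z : β → U) :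
    fiber (⊥ : L'.Formula (α ⊕ β)) z = ∅ := by
  ext
  simp [fiber]

theorem mem_defFam_relabel_inr {L' : FirstOrder.Language.{u, u}} [L'.Structure U] {m : ℕ}
    (ψ : L'.Formula (Fin m)) (b : Fin m → U) (a : α → U) :
    a ∈ defFam (ψ.relabel Sum.inr) b ↔ ψ.Realize b := by
  simp [defFam, Formula.realize_relabel]

theorem defFam_not {L' : FirstOrder.Language.{u, u}} [L'.Structure U] {m : ℕ}
    (φ : L'.Formula (α ⊕ Fin m)) (b : Fin m → U) : defFam φ.not b = (defFam φ b)ᶜ := by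
  ext a
  simp [defFam]

theorem fiber_lift {A : Set U} (θ : L.Formula (α ⊕ β)) (z : β → U) :
    fiber ((L.lhomWithConstants A).onFormula θ) z = fiber θ z := by
  ext a
  exact LHom.realize_onFormula _ _

theorem defFam_lift {A : Set U} {m : ℕ} (θ : L.Formula (α ⊕ Fin m)) (e : Fin m → U) :
    defFam ((L.lhomWithConstants A).onFormula θ) e = defFam θ e :=
  fiber_lift θ e

theorem fiber_mem_Dset {A : Set U} (φ : L.Formula (α ⊕ β)) (z : β → U) (hz : ∀ j, z j ∈ A) :
    fiber φ z ∈ Dset L A α := by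
  rw [Dset, Set.mem_ofPred_eq, Set.definable_iff_exists_formula_sum]
  refine ⟨φ.relabel (Sum.elim Sum.inr fun j => Sum.inl ⟨z j, hz j⟩), ?_⟩
  ext a
  simp only [fiber, Set.mem_ofPred_eq, Formula.realize_relabel]
  congr! 1
  ext (x | j) <;> rfl

theorem exists_fiber_eq_of_definable {A : Set U} {γ : Type*} {s : Set (γ → U)}
    (hs : A.Definable L s) :
    ∃ (m : ℕ) (φ : L.Formula (γ ⊕ Fin m)) (e : Fin m → U), (∀ j, e j ∈ A) ∧ s = fiber φ e := by
  obtain ⟨A₀, hA₀, hdef⟩ := Set.definable_iff_finitely_definable.mp hs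
  obtain ⟨φ, rfl⟩ := Set.definable_iff_exists_formula_sum.mp hdef
  let enum := (A₀ : Set U).toFinite.equivFin
  refine ⟨_, φ.relabel (Sum.elim (Sum.inr ∘ enum) Sum.inl), fun j => enum.symm j,
    fun j => hA₀ (enum.symm j).2, ?_⟩
  ext b
  simp only [fiber, Set.mem_ofPred_eq, Formula.realize_relabel]
  congr! 1
  ext (x | x) <;> simp

theorem exists_defFam_eq_of_mem_Dset {A : Set U} {s : Set (α → U)} (hs : s ∈ Dset L A α) :
    ∃ (m : ℕ) (φ : L.Formula (α ⊕ Fin m)) (e : Fin m → U), (∀ j, e j ∈ A) ∧ s = defFam φ e :=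
  exists_fiber_eq_of_definable hs

theorem exists_defFam_append_eq {A : Set U} {k : ℕ} (χ : (L[[A]]).Formula (α ⊕ Fin k)) :
    ∃ (k' : ℕ) (θ : L.Formula (α ⊕ Fin (k + k'))) (c : Fin k' → U), (∀ j, c j ∈ A) ∧
      ∀ e, defFam χ e = defFam θ (Fin.append e c) := by
  obtain ⟨k', θ, c, hc, hrep⟩ :=
    exists_fiber_eq_of_definable (L := L) (A := A) (s := {h | χ.Realize h}) ⟨χ, rfl⟩
  refine ⟨k', θ.relabel (Sum.elim (Sum.map id (Fin.castAdd k')) (Sum.inr ∘ Fin.natAdd k)), c,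
    hc, fun e => ?_⟩
  ext a
  have h : χ.Realize (Sum.elim a e) ↔ θ.Realize (Sum.elim (Sum.elim a e) c) :=
    Set.ext_iff.mp hrep (Sum.elim a e)
  simp only [defFam, Set.mem_ofPred_eq, Formula.realize_relabel, h]
  congr! 1
  ext ((x | j) | j) <;> simp

theorem defFam_mem_Dset_of_LM {A B : Set U} (hAB : A ⊆ B) {k : ℕ}
    (χ : (L[[A]]).Formula (α ⊕ Fin k)) (e : Fin k → U) (he : ∀ j, e j ∈ B) :
    defFam χ e ∈ Dset L B α := by
  obtain ⟨k', θ, c, hc, hrep⟩ := exists_defFam_append_eq χ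
  rw [hrep]
  exact fiber_mem_Dset θ _ fun j => Fin.addCases (fun i => by simpa using he i)
    (fun i => by simpa using hAB (hc i)) j

theorem exists_formula_realize_append {A : Set U} {m k : ℕ}
    (ψ : (L[[A]]).Formula (Fin (m + k))) (c : Fin k → U) (hc : ∀ j, c j ∈ A) :
    ∃ ψ' : (L[[A]]).Formula (Fin m), ∀ e, ψ'.Realize e ↔ ψ.Realize (Fin.append e c) := by
  refine ⟨(ψ.relabel finSumFinEquiv.symm).subst
    (Sum.elim Term.var fun j => (L.con ⟨c j, hc j⟩).term), fun e => ?_⟩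
  rw [Formula.Realize, BoundedFormula.realize_subst, ← Formula.Realize,
    Formula.realize_relabel]
  congr! 1
  ext i
  rcases h : finSumFinEquiv.symm i with j | j <;>
    simp [← finSumFinEquiv.eq_symm_apply.mp h.symm]

end Formulas

section Quantifiers

variable {L' : FirstOrder.Language.{u, u}} {U : Type u} [L'.Structure U] {α : Type u} {β : Type*}

theorem finite_inl_mem_freeVarFinset [DecidableEq (α ⊕ β)] (φ : L'.Formula (α ⊕ β)) :
    Finite {a : α // Sum.inl a ∈ φ.freeVarFinset} :=
  Finite.of_injective (fun a => (⟨Sum.inl a.1, a.2⟩ : φ.freeVarFinset))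
    fun _ _ hab => Subtype.ext (Sum.inl_injective (congrArg Subtype.val hab))

/-- Universal quantification over a possibly infinite block of variables `α`: only its
finitely many free variables need to be quantified. -/
noncomputable def forallLeft (φ : L'.Formula (α ⊕ β)) : L'.Formula β :=
  letI := Classical.decEq (α ⊕ β)
  haveI := finite_inl_mem_freeVarFinset φ
  Formula.iAlls {a : α // Sum.inl a ∈ φ.freeVarFinset}
    (φ.restrictFreeVar fun x =>
      match x with
      | ⟨Sum.inl a, h⟩ => Sum.inr ⟨a, by simpa using h⟩
      | ⟨Sum.inr b, _⟩ => Sum.inl b)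

theorem realize_forallLeft [Nonempty U] {φ : L'.Formula (α ⊕ β)} {w : β → U} :
    (forallLeft φ).Realize w ↔ ∀ a : α → U, φ.Realize (Sum.elim a w) := by
  let _ := Classical.decEq (α ⊕ β)
  have := finite_inl_mem_freeVarFinset φ
  rw [forallLeft, Formula.realize_iAlls]
  unfold Formula.Realize
  constructor
  · intro h a
    refine (BoundedFormula.realize_restrictFreeVar (Sum.elim a w) ?_).mp (h fun x => a x.1)
    rintro ⟨a' | b', h'⟩ <;> rfl
  · intro h i
    refine (BoundedFormula.realize_restrictFreeVar (Sum.elim (fun a =>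
      if ha : Sum.inl a ∈ φ.freeVarFinset then i ⟨a, ha⟩ else Classical.arbitrary U) w) ?_).mpr
        (h _)
    rintro ⟨a' | b', h'⟩
    · simp only [Sum.elim_inl, dif_pos (show Sum.inl a' ∈ φ.freeVarFinset by simpa using h')]
      rfl
    · rfl

noncomputable def sameFiber (F G : L'.Formula (α ⊕ β)) : L'.Formula β :=
  forallLeft (F.iff G)

theorem realize_sameFiber [Nonempty U] {F G : L'.Formula (α ⊕ β)} {z : β → U} :
    (sameFiber F G).Realize z ↔ fiber F z = fiber G z := by
  simp [sameFiber, realize_forallLeft, Set.ext_iff, fiber]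

end Quantifiers

section FiniteAdditivity

variable {X : Type u} {D : Set (Set X)}

theorem FAM.val_empty (ν : FAM X D) (h : ∅ ∈ D) : ν.val ∅ = 0 := by
  have := ν.additive ∅ ∅ h h disjoint_bot_left
  rw [Set.empty_union] at this
  linarith

theorem FAM.val_compl (ν : FAM X D) {s : Set X} (hs : s ∈ D) (hsc : sᶜ ∈ D) :
    ν.val sᶜ = 1 - ν.val s := by
  have := ν.additive s sᶜ hs hsc disjoint_compl_right
  rw [Set.union_compl_self, ν.isProb] at this
  linarith

theorem KMeasure.val_mem_Icc {L : FirstOrder.Language.{u, u}} {U : Type u} [L.Structure U]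
    {α : Type u} {A : Set U} (ν : KMeasure L A α) {s : Set (α → U)} (hs : s ∈ Dset L A α) :
    ν.val s ∈ Set.Icc (0 : ℝ) 1 :=
  ⟨ν.nonneg s hs, by linarith [ν.val_compl hs hs.compl, ν.nonneg _ hs.compl]⟩

end FiniteAdditivity

section TarskiVaught

variable {L : FirstOrder.Language.{u, u}} {U : Type u} [L.Structure U] {Mset : Set U}

theorem IsElemSubset.meetsDefinable (hM : IsElemSubset L U Mset) : L.MeetsDefinable Mset := by
  rintro D ⟨x, hx⟩ hD
  obtain ⟨k, θ, c, hc, hrep⟩ := exists_fiber_eq_of_definable hD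
  have hθ : ∀ a : Fin 1 → U, a 0 ∈ D ↔ (θ.relabel Sum.swap).Realize (Sum.elim c a) := by
    intro a
    rw [Formula.realize_relabel, Sum.elim_swap]
    exact Set.ext_iff.mp hrep a
  obtain ⟨a, haM, ha⟩ := hM.2 k (θ.relabel Sum.swap) c hc ⟨fun _ => x, (hθ _).mp hx⟩
  exact ⟨a 0, (hθ a).mpr ha, haM 0⟩

theorem IsElemSubset.exists_realize_mem (hM : IsElemSubset L U Mset) {m : ℕ}
    (Θ : (L[[Mset]]).Formula (Fin m)) (h : ∃ b : Fin m → U, Θ.Realize b) :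
    ∃ d, (∀ i, d i ∈ Mset) ∧ Θ.Realize d := by
  let S := hM.meetsDefinable.toElementarySubstructure
  have hS : (S : Set U) = Mset := hM.meetsDefinable.closure_eq_self
  obtain ⟨k, θ, c, hc, hrep⟩ := exists_fiber_eq_of_definable (L := L) (A := Mset)
    (s := {b : Fin m → U | Θ.Realize b}) ⟨Θ, rfl⟩
  rw [← hS] at hc
  let c' : Fin k → S := fun j => ⟨c j, hc j⟩
  have hΘ : ∀ b, Θ.Realize b ↔ (θ.relabel Sum.swap).Realize (Sum.elim c b) := by
    intro b
    rw [Formula.realize_relabel, Sum.elim_swap]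
    exact Set.ext_iff.mp hrep b
  obtain ⟨b, hb⟩ := h
  have hU : (θ.relabel Sum.swap).iExs.Realize (S.subtype ∘ c') :=
    Formula.realize_iExs.mpr ⟨b, (hΘ b).mp hb⟩
  obtain ⟨w, hw⟩ := Formula.realize_iExs.mp ((S.subtype.map_formula _ _).mp hU)
  refine ⟨S.subtype ∘ w, fun i => hS ▸ (w i).2, (hΘ _).mpr ?_⟩
  rw [← S.subtype.map_formula] at hw
  convert hw using 2
  ext (j | j) <;> rfl

end TarskiVaught

section DefinableExtension

variable {L : FirstOrder.Language.{u, u}} {U : Type u} [L.Structure U] {α : Type u}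
  {Mset : Set U}

theorem DefinableOver.exists_formula_abs_sub_lt {ν : KMeasure L (Set.univ : Set U) α}
    (hdef : DefinableOver L ν.val Mset) {k : ℕ} (χ : (L[[Mset]]).Formula (α ⊕ Fin k))
    (e : Fin k → U) {ε : ℝ} (hε : 0 < ε) :
    ∃ ψ : (L[[Mset]]).Formula (Fin k), ψ.Realize e ∧
      ∀ e', ψ.Realize e' → |ν.val (defFam χ e') - ν.val (defFam χ e)| < ε := by
  obtain ⟨k', θ, c, hc, hrep⟩ := exists_defFam_append_eq χ
  simp only [hrep]
  set r := ν.val (defFam θ (Fin.append e c))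
  obtain ⟨ψ₁, h₁e, h₁⟩ := (hdef.2 _ θ (r + ε)).1 _ (by linarith)
  obtain ⟨ψ₂, h₂e, h₂⟩ := (hdef.2 _ θ (r - ε)).2 _ (by linarith)
  obtain ⟨ψ, hψ⟩ := exists_formula_realize_append (ψ₁ ⊓ ψ₂) c hc
  refine ⟨ψ, (hψ e).mpr (Formula.realize_inf.mpr ⟨h₁e, h₂e⟩), fun e' he' => ?_⟩
  obtain ⟨h1, h2⟩ := Formula.realize_inf.mp ((hψ e').mp he')
  rw [abs_sub_lt_iff]
  constructor <;> linarith [h₁ _ h1, h₂ _ h2]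

theorem DefinableOver.isHeir (hM : IsElemSubset L U Mset) {ν : KMeasure L (Set.univ : Set U) α}
    (hdef : DefinableOver L ν.val Mset) : IsHeir L ν.val Mset (Set.univ : Set U) := by
  intro ε hε n m χ b _
  choose ψ hψb hψ using fun i => hdef.exists_formula_abs_sub_lt (χ i) b hε
  obtain ⟨d, hdM, hd⟩ :=
    hM.exists_realize_mem (Formula.iInf ψ) ⟨b, Formula.realize_iInf.mpr hψb⟩
  refine ⟨d, hdM, fun i => ?_⟩
  rw [abs_sub_comm]
  exact hψ i d (Formula.realize_iInf.mp hd i)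

theorem IsHeir.exists_realize_abs_sub_lt {ν : KMeasure L (Set.univ : Set U) α}
    (hheir : IsHeir L ν.val Mset (Set.univ : Set U)) {k : ℕ}
    {ψ : (L[[Mset]]).Formula (Fin k)} {e : Fin k → U} (he : ψ.Realize e)
    (χ : (L[[Mset]]).Formula (α ⊕ Fin k)) {ε : ℝ} (hε : 0 < ε) :
    ∃ d, (∀ j, d j ∈ Mset) ∧ ψ.Realize d ∧ |ν.val (defFam χ e) - ν.val (defFam χ d)| < ε := by
  obtain ⟨d, hdM, hd⟩ := hheir (min ε 1) (lt_min hε one_pos) 2 k ![ψ.relabel Sum.inr, χ] e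
    fun _ => trivial
  refine ⟨d, hdM, ?_, (hd 1).trans_le (min_le_left _ _)⟩
  -- `ψ(U; e)` is everything, so the approximating `ψ(U; d)` cannot be empty
  by_contra hψd
  have h0 := (hd 0).trans_le (min_le_right _ _)
  have he' : defFam (α := α) (ψ.relabel Sum.inr) e = Set.univ :=
    Set.eq_univ_of_forall fun a => (mem_defFam_relabel_inr ψ e a).mpr he
  have hd' : defFam (α := α) (ψ.relabel Sum.inr) d = ∅ :=
    Set.eq_empty_of_forall_notMem fun a => hψd ∘ (mem_defFam_relabel_inr ψ d a).mp
  simp only [Matrix.cons_val_zero, he', hd', ν.isProb, ν.val_empty Set.definable_empty] at h0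
  norm_num at h0

theorem DefinableOver.agreeOn_of_isHeir {μ : KMeasure L Mset α}
    {ν ν₁ : KMeasure L (Set.univ : Set U) α} (hext : agreeOn (Dset L Mset α) ν.val μ.val)
    (hdef : DefinableOver L ν.val Mset) (hext₁ : agreeOn (Dset L Mset α) ν₁.val μ.val)
    (hheir₁ : IsHeir L ν₁.val Mset (Set.univ : Set U)) :
    agreeOn (Dset L (Set.univ : Set U) α) ν₁.val ν.val := by
  intro s hs
  obtain ⟨k, θ, e, -, rfl⟩ := exists_defFam_eq_of_mem_Dset hs
  rw [← defFam_lift (A := Mset)]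
  set χ := (L.lhomWithConstants Mset).onFormula θ
  refine eq_of_forall_dist_le fun ε hε => ?_
  obtain ⟨ψ, hψe, hψ⟩ := hdef.exists_formula_abs_sub_lt χ e (half_pos hε)
  obtain ⟨d, hdM, hψd, hd⟩ := hheir₁.exists_realize_abs_sub_lt hψe χ (half_pos hε)
  have hχd : defFam χ d ∈ Dset L Mset α := defFam_mem_Dset_of_LM subset_rfl χ d hdM
  rw [hext₁ _ hχd, ← hext _ hχd] at hd
  rw [Real.dist_eq]
  linarith [abs_sub_le (ν₁.val (defFam χ e)) (ν.val (defFam χ d)) (ν.val (defFam χ e)),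
    hψ d hψd]

end DefinableExtension

section Transport

variable {L : FirstOrder.Language.{u, u}} {U : Type u} [L.Structure U] {α : Type u}
  {Mset : Set U}

theorem exists_realize_comp_of_forall [Nonempty U] {m : ℕ} {b : Fin m → U}
    {P : (Fin m → U) → Prop}
    (hP : ∀ ψ : (L[[Mset]]).Formula (Fin m), ψ.Realize b → ∃ b', ψ.Realize b' ∧ P b')
    (δ : (L[[Mset]]).Formula U) (hδ : δ.Realize id) :
    ∃ z : U → U, δ.Realize z ∧ P (z ∘ b) := by
  let ψ : (L[[Mset]]).Formula (Fin m) := (forallLeft (δ.relabel Sum.inl ⊓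
    Formula.iInf fun i => (Term.var (Sum.inl (b i))).equal (Term.var (Sum.inr i))).not).not
  have hψ : ∀ y, ψ.Realize y ↔ ∃ z : U → U, δ.Realize z ∧ z ∘ b = y := by
    intro y
    simp [ψ, realize_forallLeft, Formula.realize_relabel, funext_iff]
  obtain ⟨b', hb', hPb'⟩ := hP ψ ((hψ b).mpr ⟨id, hδ, rfl⟩)
  obtain ⟨z, hz, rfl⟩ := (hψ b').mp hb'
  exact ⟨z, hz, hPb'⟩

theorem exists_fiber_id_eq {s : Set (α → U)} (hs : s ∈ Dset L (Set.univ : Set U) α) :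
    ∃ F : L.Formula (α ⊕ U), fiber F id = s := by
  obtain ⟨k, θ, e, -, rfl⟩ := exists_defFam_eq_of_mem_Dset hs
  exact ⟨θ.relabel (Sum.map id e), fiber_relabel_sumMap θ e id⟩

variable (L) in
/-- Substituting other parameters `z : U → U` for `id` in a presentation transports the set
along `z`. -/
noncomputable def presentation (s : Set (α → U)) : L.Formula (α ⊕ U) :=
  if hs : s ∈ Dset L (Set.univ : Set U) α then (exists_fiber_id_eq hs).choose else ⊥

theorem fiber_presentation_id {s : Set (α → U)} (hs : s ∈ Dset L (Set.univ : Set U) α) :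
    fiber (presentation L s) id = s := by
  rw [presentation, dif_pos hs]
  exact (exists_fiber_id_eq hs).choose_spec

noncomputable def transport (ν : KMeasure L (Set.univ : Set U) α) (z : U → U) :
    Set (α → U) → ℝ :=
  fun s => ν.val (fiber (presentation L s) z)

theorem transport_mem_Icc (ν : KMeasure L (Set.univ : Set U) α) (z : U → U) (s : Set (α → U)) :
    transport ν z s ∈ Set.Icc (0 : ℝ) 1 :=
  ν.val_mem_Icc (fiber_mem_Dset _ z fun _ => trivial)

noncomputable def movesTo {m : ℕ} (χ : (L[[Mset]]).Formula (α ⊕ Fin m)) (e : Fin m → U) :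
    (L[[Mset]]).Formula U :=
  sameFiber ((L.lhomWithConstants Mset).onFormula (presentation L (defFam χ e)))
    (χ.relabel (Sum.map id e))

theorem realize_movesTo [Nonempty U] {m : ℕ} {χ : (L[[Mset]]).Formula (α ⊕ Fin m)}
    {e : Fin m → U} {z : U → U} :
    (movesTo χ e).Realize z ↔ fiber (presentation L (defFam χ e)) z = defFam χ (z ∘ e) := by
  rw [movesTo, realize_sameFiber, fiber_lift, fiber_relabel_sumMap]

theorem realize_movesTo_id [Nonempty U] {m : ℕ} (χ : (L[[Mset]]).Formula (α ⊕ Fin m))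
    (e : Fin m → U) : (movesTo χ e).Realize id := by
  rw [realize_movesTo, Function.id_comp,
    fiber_presentation_id (defFam_mem_Dset_of_LM (Set.subset_univ _) χ e fun _ => trivial)]

variable (L U α Mset) in
/-- The closed conditions on `f : Set (α → U) → ℝ` which, together with `0 ≤ f`, say that `f`
is a global heir of a given measure over `M`; with `m = 0` the heir conditions say that `f`
extends it. -/
inductive HeirConstraint : Type u
  | additive (s t : Set (α → U)) (hs : s ∈ Dset L (Set.univ : Set U) α)
      (ht : t ∈ Dset L (Set.univ : Set U) α) (hst : Disjoint s t)
  | heir (n m : ℕ) (χ : Fin n → (L[[Mset]]).Formula (α ⊕ Fin m)) (e : Fin m → U)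

namespace HeirConstraint

def carrier (μ : KMeasure L Mset α) :
    HeirConstraint L U α Mset → Set (Set (α → U) → ℝ)
  | additive s t _ _ _ => {f | f (s ∪ t) = f s + f t}
  | heir _ m χ e => {f | (fun i => f (defFam (χ i) e)) ∈
      closure ((fun d i => μ.val (defFam (χ i) d)) '' {d : Fin m → U | ∀ j, d j ∈ Mset})}

theorem isClosed_carrier (μ : KMeasure L Mset α) (c : HeirConstraint L U α Mset) :
    IsClosed (c.carrier μ) := by
  cases c with
  | additive s t =>
    exact isClosed_eq (continuous_apply _) ((continuous_apply s).add (continuous_apply t))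
  | heir n m χ e =>
    exact isClosed_closure.preimage (continuous_pi fun i => continuous_apply _)

theorem agreeOn_of_forall_mem_carrier {μ : KMeasure L Mset α} {f : Set (α → U) → ℝ}
    (hf : ∀ c : HeirConstraint L U α Mset, f ∈ c.carrier μ) :
    agreeOn (Dset L Mset α) f μ.val := by
  intro s hs
  obtain ⟨χ, rfl⟩ : Mset.Definable L s := hs
  have hχ : ∀ e : Fin 0 → U, defFam (χ.relabel Sum.inl) e = {a | χ.Realize a} := fun e => by
    ext a
    simp [defFam, Formula.realize_relabel]
  have hsub : (fun d i => μ.val (defFam (![χ.relabel Sum.inl] i) d)) ''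
      {d : Fin 0 → U | ∀ j, d j ∈ Mset} ⊆ {fun _ => μ.val {a | χ.Realize a}} := by
    rintro _ ⟨d, -, rfl⟩
    funext i
    simp [hχ]
  have := closure_mono hsub (hf (heir 1 0 ![χ.relabel Sum.inl] Fin.elim0))
  rw [closure_singleton] at this
  simpa [hχ] using congrFun this 0

theorem exists_isHeir_of_forall_mem_carrier (μ : KMeasure L Mset α) {f : Set (α → U) → ℝ}
    (hf₀ : ∀ s, 0 ≤ f s) (hf : ∀ c : HeirConstraint L U α Mset, f ∈ c.carrier μ) :
    ∃ ν : KMeasure L (Set.univ : Set U) α, ν.val = f ∧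
      agreeOn (Dset L Mset α) ν.val μ.val ∧ IsHeir L ν.val Mset (Set.univ : Set U) := by
  have hagree := agreeOn_of_forall_mem_carrier hf
  refine ⟨⟨f, fun s _ => hf₀ s, by rw [hagree _ Set.definable_univ, μ.isProb],
    fun s t hs ht hst => hf (additive s t hs ht hst)⟩, rfl, hagree, ?_⟩
  intro ε hε n m χ e _
  obtain ⟨_, ⟨d, hdM, rfl⟩, hv⟩ := Metric.mem_closure_iff.mp (hf (heir n m χ e)) ε hε
  refine ⟨d, hdM, fun i => ?_⟩
  show |f (defFam (χ i) e) - f (defFam (χ i) d)| < ε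
  rw [hagree _ (defFam_mem_Dset_of_LM subset_rfl (χ i) d hdM), ← Real.dist_eq]
  exact (dist_le_pi_dist _ _ i).trans_lt hv

noncomputable def formula : HeirConstraint L U α Mset → (L[[Mset]]).Formula U
  | additive s t _ _ _ => (L.lhomWithConstants Mset).onFormula
      (sameFiber (presentation L (s ∪ t)) (presentation L s ⊔ presentation L t) ⊓
        sameFiber (presentation L s ⊓ presentation L t) ⊥)
  | heir _ _ χ e => Formula.iInf fun i => movesTo (χ i) e

theorem realize_additive_formula [Nonempty U] {s t : Set (α → U)}
    {hs : s ∈ Dset L (Set.univ : Set U) α} {ht : t ∈ Dset L (Set.univ : Set U) α}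
    {hst : Disjoint s t} {z : U → U} :
    (additive (Mset := Mset) s t hs ht hst).formula.Realize z ↔
      fiber (presentation L (s ∪ t)) z =
          fiber (presentation L s) z ∪ fiber (presentation L t) z ∧
        fiber (presentation L s) z ∩ fiber (presentation L t) z = ∅ := by
  rw [formula, LHom.realize_onFormula, Formula.realize_inf, realize_sameFiber,
    realize_sameFiber, fiber_sup, fiber_inf, fiber_bot]

theorem realize_formula_id [Nonempty U] (c : HeirConstraint L U α Mset) :
    c.formula.Realize id := by
  cases c with
  | additive s t hs ht hst =>
    rw [realize_additive_formula, fiber_presentation_id hs, fiber_presentation_id ht,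
      fiber_presentation_id (hs.union ht)]
    exact ⟨rfl, hst.inter_eq⟩
  | heir n m χ e => exact Formula.realize_iInf.mpr fun i => realize_movesTo_id (χ i) e

theorem transport_mem_carrier [Nonempty U] {μ : KMeasure L Mset α}
    {ν : KMeasure L (Set.univ : Set U) α} (hext : agreeOn (Dset L Mset α) ν.val μ.val)
    (hheir : IsHeir L ν.val Mset (Set.univ : Set U)) {c : HeirConstraint L U α Mset}
    {z : U → U} (hz : c.formula.Realize z) : transport ν z ∈ c.carrier μ := by
  cases c with
  | additive s t hs ht hst =>
    obtain ⟨hunion, hinter⟩ := realize_additive_formula.mp hz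
    show ν.val _ = ν.val _ + ν.val _
    rw [hunion]
    exact ν.additive _ _ (fiber_mem_Dset _ z fun _ => trivial)
      (fiber_mem_Dset _ z fun _ => trivial) (Set.disjoint_iff_inter_eq_empty.mpr hinter)
  | heir n m χ e =>
    have hmoves i : transport ν z (defFam (χ i) e) = ν.val (defFam (χ i) (z ∘ e)) :=
      congrArg ν.val (realize_movesTo.mp (Formula.realize_iInf.mp hz i))
    refine Metric.mem_closure_iff.mpr fun ε hε => ?_
    obtain ⟨d, hdM, hd⟩ := hheir ε hε n m χ (z ∘ e) fun _ => trivial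
    refine ⟨_, ⟨d, hdM, rfl⟩, (dist_pi_lt_iff hε).mpr fun i => ?_⟩
    beta_reduce
    rw [Real.dist_eq, hmoves, ← hext _ (defFam_mem_Dset_of_LM subset_rfl (χ i) d hdM)]
    exact hd i

end HeirConstraint

end Transport

section UniqueHeir

variable {L : FirstOrder.Language.{u, u}} {U : Type u} [L.Structure U] {α : Type u}
  {Mset : Set U} {μ : KMeasure L Mset α} {ν : KMeasure L (Set.univ : Set U) α}

variable (μ) in
def GlobalHeirsAgree : Prop :=
  ∀ ν₁ ν₂ : KMeasure L (Set.univ : Set U) α,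
    agreeOn (Dset L Mset α) ν₁.val μ.val → IsHeir L ν₁.val Mset (Set.univ : Set U) →
    agreeOn (Dset L Mset α) ν₂.val μ.val → IsHeir L ν₂.val Mset (Set.univ : Set U) →
    agreeOn (Dset L (Set.univ : Set U) α) ν₁.val ν₂.val

theorem exists_transport_mem_carrier [Nonempty U] (hext : agreeOn (Dset L Mset α) ν.val μ.val)
    (hheir : IsHeir L ν.val Mset (Set.univ : Set U)) {m : ℕ}
    {χ : (L[[Mset]]).Formula (α ⊕ Fin m)} {r : ℝ} {b : Fin m → U}
    (hr : ∀ ψ : (L[[Mset]]).Formula (Fin m), ψ.Realize b →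
      ∃ b', ψ.Realize b' ∧ r ≤ ν.val (defFam χ b'))
    (u : Finset (HeirConstraint L U α Mset)) :
    ∃ z, r ≤ transport ν z (defFam χ b) ∧ ∀ c ∈ u, transport ν z ∈ c.carrier μ := by
  obtain ⟨z, hz, hzr⟩ := exists_realize_comp_of_forall hr
    (movesTo χ b ⊓ Formula.iInf fun c : u => c.1.formula)
    (Formula.realize_inf.mpr ⟨realize_movesTo_id χ b,
      Formula.realize_iInf.mpr fun c => c.1.realize_formula_id⟩)
  obtain ⟨hzχ, hzu⟩ := Formula.realize_inf.mp hz
  refine ⟨z, ?_, fun c hc => HeirConstraint.transport_mem_carrier hext hheir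
    (Formula.realize_iInf.mp hzu ⟨c, hc⟩)⟩
  rwa [transport, realize_movesTo.mp hzχ]

theorem exists_formula_lt_of_globalHeirsAgree (hM : IsElemSubset L U Mset)
    (hext : agreeOn (Dset L Mset α) ν.val μ.val)
    (hheir : IsHeir L ν.val Mset (Set.univ : Set U)) (huniq : GlobalHeirsAgree μ)
    {m : ℕ} (χ : (L[[Mset]]).Formula (α ⊕ Fin m)) (r : ℝ) (b : Fin m → U)
    (hb : ν.val (defFam χ b) < r) :
    ∃ ψ : (L[[Mset]]).Formula (Fin m), ψ.Realize b ∧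
      ∀ b', ψ.Realize b' → ν.val (defFam χ b') < r := by
  have : Nonempty U := hM.1.to_subtype.map Subtype.val
  by_contra! hr
  let K : Set (Set (α → U) → ℝ) :=
    Set.pi Set.univ (fun _ => Set.Icc 0 1) ∩ {f | r ≤ f (defFam χ b)}
  have hK : IsCompact K := (isCompact_univ_pi fun _ => isCompact_Icc).inter_right
    (isClosed_le continuous_const (continuous_apply _))
  obtain ⟨f, ⟨hf₀₁, hfr⟩, hf⟩ := hK.inter_iInter_nonempty _
    (HeirConstraint.isClosed_carrier μ) fun u => by
      obtain ⟨z, hzr, hz⟩ := exists_transport_mem_carrier hext hheir hr u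
      exact ⟨transport ν z, ⟨fun s _ => transport_mem_Icc ν z s, hzr⟩, Set.mem_iInter₂.mpr hz⟩
  obtain ⟨ν', rfl, hext', hheir'⟩ := HeirConstraint.exists_isHeir_of_forall_mem_carrier μ
    (fun s => (hf₀₁ s trivial).1) (Set.mem_iInter.mp hf)
  have := huniq ν' ν hext' hheir' hext hheir _
    (defFam_mem_Dset_of_LM (Set.subset_univ _) χ b fun _ => trivial)
  linarith [show r ≤ ν'.val (defFam χ b) from hfr]

theorem definableOver_of_globalHeirsAgree (hM : IsElemSubset L U Mset)
    (hext : agreeOn (Dset L Mset α) ν.val μ.val)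
    (hheir : IsHeir L ν.val Mset (Set.univ : Set U)) (huniq : GlobalHeirsAgree μ) :
    DefinableOver L ν.val Mset := by
  have hlt {m : ℕ} := exists_formula_lt_of_globalHeirsAgree hM hext hheir huniq (m := m)
  have hgt {m : ℕ} (χ : (L[[Mset]]).Formula (α ⊕ Fin m)) (r : ℝ) (b : Fin m → U)
      (hb : r < ν.val (defFam χ b)) : ∃ ψ : (L[[Mset]]).Formula (Fin m), ψ.Realize b ∧
        ∀ b', ψ.Realize b' → r < ν.val (defFam χ b') := by
    have hnot b : ν.val (defFam χ.not b) = 1 - ν.val (defFam χ b) := by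
      have hχb := defFam_mem_Dset_of_LM (Set.subset_univ _) χ b fun _ => trivial
      rw [defFam_not]
      exact ν.val_compl hχb hχb.compl
    obtain ⟨ψ, hψb, hψ⟩ := hlt χ.not (1 - r) b (by linarith [hnot b])
    exact ⟨ψ, hψb, fun b' hb' => by linarith [hnot b', hψ b' hb']⟩
  have hle {m : ℕ} (χ : (L[[Mset]]).Formula (α ⊕ Fin m)) (b b' : Fin m → U)
      (hbb' : SameTypeOver L Mset b b') : ν.val (defFam χ b') ≤ ν.val (defFam χ b) := by
    by_contra! h
    obtain ⟨ψ, hψb, hψ⟩ := hlt χ ((ν.val (defFam χ b) + ν.val (defFam χ b')) / 2) b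
      (by linarith)
    linarith [hψ b' ((hbb' ψ).mp hψb)]
  refine ⟨fun m χ b b' hbb' =>
      le_antisymm (hle χ b' b fun ψ => (hbb' ψ).symm) (hle χ b b' hbb'),
    fun m φ r => ⟨fun b hb => ?_, fun b hb => ?_⟩⟩
  · obtain ⟨ψ, hψb, hψ⟩ := hlt _ r b (by rwa [defFam_lift])
    exact ⟨ψ, hψb, fun b' hb' => by rw [← defFam_lift (A := Mset)]; exact hψ b' hb'⟩
  · obtain ⟨ψ, hψb, hψ⟩ := hgt _ r b (by rwa [defFam_lift])
    exact ⟨ψ, hψb, fun b' hb' => by rw [← defFam_lift (A := Mset)]; exact hψ b' hb'⟩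

end UniqueHeir

theorem statement_2_general
    (L : FirstOrder.Language.{u, u}) (U : Type u) [L.Structure U]
    (Mset : Set U) (hM : IsElemSubset L U Mset)
    (α : Type u) (μ : KMeasure L Mset α) :
    (∃ ν : KMeasure L (Set.univ : Set U) α,
        agreeOn (Dset L Mset α) ν.val μ.val ∧ DefinableOver L ν.val Mset) ↔
      ((∃ ν : KMeasure L (Set.univ : Set U) α,
          agreeOn (Dset L Mset α) ν.val μ.val ∧ IsHeir L ν.val Mset (Set.univ : Set U)) ∧
        ∀ ν₁ ν₂ : KMeasure L (Set.univ : Set U) α,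
          agreeOn (Dset L Mset α) ν₁.val μ.val → IsHeir L ν₁.val Mset (Set.univ : Set U) →
          agreeOn (Dset L Mset α) ν₂.val μ.val → IsHeir L ν₂.val Mset (Set.univ : Set U) →
          agreeOn (Dset L (Set.univ : Set U) α) ν₁.val ν₂.val) := by
  constructor
  · rintro ⟨ν, hext, hdef⟩
    refine ⟨⟨ν, hext, hdef.isHeir hM⟩, fun ν₁ ν₂ hext₁ hheir₁ hext₂ hheir₂ s hs => ?_⟩
    rw [hdef.agreeOn_of_isHeir hext hext₁ hheir₁ s hs,
      hdef.agreeOn_of_isHeir hext hext₂ hheir₂ s hs]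
  · rintro ⟨⟨ν, hext, hheir⟩, huniq⟩
    exact ⟨ν, hext, definableOver_of_globalHeirsAgree hM hext hheir huniq⟩

/-- Let `μ` be a Keisler measure over a small model `M`.  Then `μ`
extends to a global `M`-definable Keisler measure if and only if `μ` has a unique global
heir over `M`. -/
theorem statement_2
    (L : FirstOrder.Language.{u, u}) (U : Type u) [L.Structure U]
    (κ : Cardinal.{u}) (hMon : IsMonster L U κ)
    (Mset : Set U) (hM : IsElemSubset L U Mset) (hMsmall : SmallSet L κ Mset)
    (α : Type u) (μ : KMeasure L Mset α) :
    (∃ ν : KMeasure L (Set.univ : Set U) α,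
        agreeOn (Dset L Mset α) ν.val μ.val ∧ DefinableOver L ν.val Mset) ↔
      ((∃ ν : KMeasure L (Set.univ : Set U) α,
          agreeOn (Dset L Mset α) ν.val μ.val ∧ IsHeir L ν.val Mset (Set.univ : Set U)) ∧
        ∀ ν₁ ν₂ : KMeasure L (Set.univ : Set U) α,
          agreeOn (Dset L Mset α) ν₁.val μ.val → IsHeir L ν₁.val Mset (Set.univ : Set U) →
          agreeOn (Dset L Mset α) ν₂.val μ.val → IsHeir L ν₂.val Mset (Set.univ : Set U) →
          agreeOn (Dset L (Set.univ : Set U) α) ν₁.val ν₂.val) :=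
  statement_2_general L U Mset hM α μ

end KeislerPaper
end

section
/- Let μ(x) and ν(y) be smooth Keisler measures over a small model M. Then their unique separated amalgam μ × ν (in variables xy) is smooth over M. -/
namespace KeislerPaper

open FirstOrder FirstOrder.Language Set MeasureTheory
open scoped ENNReal Classical

universe u v

/-! Smoothness of `μ` squeezes every definable fibre `φ(x; b)` between `M`-definable sets
`θ₁ ⊆ φ(x; b) ⊆ θ₂` with `μ(θ₂) - μ(θ₁) < ε`: the global extensions of `μ` giving `φ(x; b)` its
outer, respectively inner, measure (ultrafilter limits of atomic measures) must coincide. By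
compactness finitely many squeezes suffice, along a definable partition `(ψᵢ)` of the `y`-space.
Every global extension `W` of `μ × ν` gives a rectangle `θ(x) ∧ ψ(y)` the value `μ(θ) ν'(ψ)`,
where `ν'` is the unique global extension of `ν`, because conditioning `W` on `θ` extends `ν`.
Hence `W(φ)` lies between `∑ μ(θ₁ᵢ) ν'(ψᵢ)` and `∑ μ(θ₂ᵢ) ν'(ψᵢ)`, an interval of length at
most `ε` that does not depend on `W`. -/

open scoped Function

theorem isSetAlgebra_univ {X : Type*} : IsSetAlgebra (univ : Set (Set X)) :=
  ⟨trivial, fun _ _ => trivial, fun _ _ _ _ => trivial⟩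

namespace FAM

variable {X : Type u} {D D' : Set (Set X)}

def restrict (μ : FAM X D) (h : D' ⊆ D) : FAM X D' where
  val := μ.val
  nonneg s hs := μ.nonneg s (h hs)
  isProb := μ.isProb
  additive s t hs ht := μ.additive s t (h hs) (h ht)

section IsSetAlgebra

variable (hD : IsSetAlgebra D)
include hD

theorem nonempty_of_isSetAlgebra (μ : FAM X D) : Nonempty X := by
  by_contra h
  have huniv : (univ : Set X) = ∅ := univ_eq_empty_iff.mpr (not_nonempty_iff.mp h)
  have h0 := μ.additive ∅ ∅ hD.empty_mem hD.empty_mem (disjoint_empty ∅)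
  rw [union_empty, ← huniv, μ.isProb] at h0
  linarith

variable (μ : FAM X D)

theorem val_empty_s8 : μ.val ∅ = 0 := by
  have h := μ.additive ∅ ∅ hD.empty_mem hD.empty_mem (disjoint_empty ∅)
  rw [union_empty] at h
  linarith

theorem val_mono {s t : Set X} (hs : s ∈ D) (ht : t ∈ D) (hst : s ⊆ t) :
    μ.val s ≤ μ.val t := by
  have h := μ.additive s (t \ s) hs (hD.sdiff_mem ht hs) disjoint_sdiff_right
  rw [union_sdiff_cancel hst] at h
  linarith [μ.nonneg _ (hD.sdiff_mem ht hs)]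

theorem val_compl_s8 {s : Set X} (hs : s ∈ D) : μ.val sᶜ = 1 - μ.val s := by
  have h := μ.additive s sᶜ hs (hD.compl_mem hs) disjoint_compl_right
  rw [union_compl_self, μ.isProb] at h
  linarith

theorem val_biUnion_finset {ι : Type*} (T : Finset ι) {f : ι → Set X}
    (hf : ∀ i ∈ T, f i ∈ D) (hdisj : (T : Set ι).PairwiseDisjoint f) :
    μ.val (⋃ i ∈ T, f i) = ∑ i ∈ T, μ.val (f i) := by
  classical
  induction T using Finset.induction_on with
  | empty => simpa using μ.val_empty_s8 hD
  | @insert a T ha ih =>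
    have hfT : ∀ i ∈ T, f i ∈ D := fun i hi => hf i (Finset.mem_insert_of_mem hi)
    rw [Finset.set_biUnion_insert, Finset.sum_insert ha,
      μ.additive _ _ (hf a (Finset.mem_insert_self a T)) (hD.biUnion_mem T hfT),
      ih hfT (hdisj.subset (by simp))]
    refine disjoint_iUnion₂_right.mpr fun i hi => hdisj (by simp) (by simp [hi]) ?_
    rintro rfl
    exact ha hi

theorem val_preimage_finset {ι : Type*} (p : X → ι) (hp : ∀ i, p ⁻¹' {i} ∈ D)
    (T : Finset ι) : μ.val (p ⁻¹' T) = ∑ i ∈ T, μ.val (p ⁻¹' {i}) := by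
  rw [← Finset.set_biUnion_preimage_singleton]
  exact μ.val_biUnion_finset hD T (fun i _ => hp i) (pairwiseDisjoint_fiber p _)

theorem val_eq_sum_inter {ι : Type*} [Fintype ι] {P : ι → Set X}
    (hdisj : Pairwise (Disjoint on P)) (hcover : ⋃ i, P i = univ) {s : Set X}
    (hs : ∀ i, s ∩ P i ∈ D) : μ.val s = ∑ i, μ.val (s ∩ P i) := by
  have hunion : s = ⋃ i ∈ (Finset.univ : Finset ι), s ∩ P i := by
    simp [← inter_iUnion, hcover]
  conv_lhs => rw [hunion]
  exact μ.val_biUnion_finset hD _ (fun i _ => hs i)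
    fun i _ j _ hij => (hdisj hij).mono inter_subset_right inter_subset_right

theorem sum_mul_val_le {ι : Type*} [Fintype ι] {P : ι → Set X} (hP : ∀ i, P i ∈ D)
    (hdisj : Pairwise (Disjoint on P)) (hcover : ⋃ i, P i = univ) {a : ι → ℝ} {ε : ℝ}
    (ha : ∀ i, a i ≤ ε) : ∑ i, a i * μ.val (P i) ≤ ε :=
  calc ∑ i, a i * μ.val (P i) ≤ ∑ i, ε * μ.val (P i) :=
        Finset.sum_le_sum fun i _ => mul_le_mul_of_nonneg_right (ha i) (μ.nonneg _ (hP i))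
    _ = ε := by
        have h := μ.val_eq_sum_inter hD hdisj hcover (s := univ) (by simpa using hP)
        simp only [univ_inter, μ.isProb] at h
        rw [← Finset.mul_sum, ← h, mul_one]

end IsSetAlgebra

noncomputable def atomic {ι : Type*} [Fintype ι] (w : ι → ℝ) (hw : ∀ i, 0 ≤ w i)
    (hw1 : ∑ i, w i = 1) (x : ι → X) : FAM X univ where
  val s := ∑ i, if x i ∈ s then w i else 0
  nonneg s _ := Finset.sum_nonneg fun i _ => by split_ifs <;> simp [hw i]
  isProb := by simpa using hw1
  additive s t _ _ hst := by
    rw [← Finset.sum_add_distrib]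
    refine Finset.sum_congr rfl fun i _ => ?_
    by_cases hs : x i ∈ s
    · simp [hs, disjoint_left.mp hst hs]
    · by_cases ht : x i ∈ t <;> simp [hs, ht]

end FAM

theorem exists_fiber_rep {X ι : Type*} [Nonempty X] (p : X → ι) (e : Set X) :
    ∃ x : ι → X, ∀ y, p (x (p y)) = p y ∧ (y ∈ e → x (p y) ∈ e) := by
  have hrep : ∀ i, ∃ z, (∀ y, p y = i → p z = i) ∧ ∀ y ∈ e, p y = i → z ∈ e := by
    intro i
    by_cases he : ∃ y ∈ e, p y = i
    · obtain ⟨y, hy, rfl⟩ := he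
      exact ⟨y, fun _ _ => rfl, fun _ _ _ => hy⟩
    by_cases hi : ∃ y, p y = i
    · obtain ⟨y, rfl⟩ := hi
      exact ⟨y, fun _ _ => rfl, fun y' hy' h => absurd ⟨y', hy', h⟩ he⟩
    · exact ⟨Classical.arbitrary X, fun y h => absurd ⟨y, h⟩ hi, fun y _ h => absurd ⟨y, h⟩ hi⟩
  choose x hx using hrep
  exact ⟨x, fun y => ⟨(hx _).1 y rfl, fun hy => (hx _).2 y hy rfl⟩⟩

theorem _root_.MeasureTheory.IsSetAlgebra.preimage_signature_mem {X : Type*}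
    {D : Set (Set X)} (hD : IsSetAlgebra D) (F : Finset D) (σ : F → Bool) :
    (fun y (a : F) => decide (y ∈ (a : Set X))) ⁻¹' {σ} ∈ D := by
  have h : (fun y (a : F) => decide (y ∈ (a : Set X))) ⁻¹' {σ} =
      ⋂ a ∈ (Finset.univ : Finset F), if σ a then (a : Set X) else (a : Set X)ᶜ := by
    ext y
    simp only [mem_preimage, mem_singleton_iff, funext_iff, Finset.mem_univ, iInter_true,
      mem_iInter]
    refine forall_congr' fun a => ?_
    cases σ a <;> simp
  rw [h]
  exact hD.biInter_mem _ fun a _ => by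
    split_ifs
    exacts [a.1.2, hD.compl_mem a.1.2]

namespace FAM

variable {X : Type u} {D : Set (Set X)}

/-- The atoms of the algebra generated by `F` are the fibres of the signature map `p`; putting
the mass of each atom at one of its points, chosen in `e` whenever possible, gives `e` the
measure of the union of the atoms meeting `e`. -/
theorem exists_atomic_approx (hD : IsSetAlgebra D) (μ : FAM X D) (F : Finset D) (e : Set X) :
    ∃ m : FAM X univ, (∀ a ∈ F, m.val a = μ.val a) ∧ ∃ c ∈ D, e ⊆ c ∧ m.val e = μ.val c := by
  have := μ.nonempty_of_isSetAlgebra hD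
  let p : X → (F → Bool) := fun y a => decide (y ∈ (a : Set X))
  have hfiber : ∀ σ, p ⁻¹' {σ} ∈ D := hD.preimage_signature_mem F
  obtain ⟨x, hx⟩ := exists_fiber_rep p e
  let m := atomic (fun σ => μ.val (p ⁻¹' {σ})) (fun σ => μ.nonneg _ (hfiber σ))
    (by rw [← μ.val_preimage_finset hD p hfiber, Finset.coe_univ, preimage_univ, μ.isProb]) x
  have hm : ∀ s, m.val s = μ.val (p ⁻¹' ↑(Finset.univ.filter fun σ => x σ ∈ s)) := by
    intro s
    rw [μ.val_preimage_finset hD p hfiber, Finset.sum_filter]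
    rfl
  refine ⟨m, fun a ha => ?_, _, ?_, fun y hy => by simpa using (hx y).2 hy, hm e⟩
  · rw [hm]
    congr 1
    ext y
    have h := congrFun (hx y).1 ⟨a, ha⟩
    simp only [p, decide_eq_decide] at h
    simpa using h
  · rw [← Finset.set_biUnion_preimage_singleton]
    exact hD.biUnion_mem _ fun σ _ => hfiber σ

theorem exists_tendsto_ultrafilter {ι : Type*} (𝒰 : Ultrafilter ι) (m : ι → FAM X univ) :
    ∃ W : FAM X univ, ∀ s, Filter.Tendsto (fun i => (m i).val s) 𝒰 (nhds (W.val s)) := by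
  have hlim : ∀ s, ∃ w, Filter.Tendsto (fun i => (m i).val s) 𝒰 (nhds w) := by
    intro s
    have hIcc : ∀ i, (m i).val s ∈ Icc (0 : ℝ) 1 := fun i =>
      ⟨(m i).nonneg s trivial,
        (m i).isProb ▸ (m i).val_mono isSetAlgebra_univ trivial trivial (subset_univ s)⟩
    obtain ⟨w, -, hw⟩ := isCompact_Icc.ultrafilter_le_nhds (𝒰.map fun i => (m i).val s)
      (Filter.le_principal_iff.mpr (Filter.mem_map.mpr (Filter.univ_mem' hIcc)))
    exact ⟨w, hw⟩
  choose W hW using hlim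
  refine ⟨⟨W, fun s _ => ge_of_tendsto' (hW s) fun i => (m i).nonneg s trivial, ?_, ?_⟩, hW⟩
  · exact tendsto_nhds_unique (hW univ) (by simp [FAM.isProb])
  · intro s t _ _ hst
    refine tendsto_nhds_unique (hW (s ∪ t)) ?_
    simpa only [(m _).additive s t trivial trivial hst] using (hW s).add (hW t)

theorem exists_extension (hD : IsSetAlgebra D) (μ : FAM X D) (e : Set X) :
    ∃ W : FAM X univ, agreeOn D W.val μ.val ∧
      ∀ ε > 0, ∃ c ∈ D, e ⊆ c ∧ μ.val c < W.val e + ε := by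
  choose m hm_agree hm_cover using fun F : Finset D => exists_atomic_approx hD μ F e
  let 𝒰 : Ultrafilter (Finset D) := .of Filter.atTop
  obtain ⟨W, hW⟩ := exists_tendsto_ultrafilter 𝒰 m
  refine ⟨W, fun a ha => ?_, fun ε hε => ?_⟩
  · have hev : ∀ᶠ F in (𝒰 : Filter (Finset D)), (m F).val a = μ.val a :=
      Ultrafilter.of_le _ (Filter.eventually_atTop.mpr
        ⟨{⟨a, ha⟩}, fun F hF => hm_agree F ⟨a, ha⟩ (hF (Finset.mem_singleton_self _))⟩)
    exact tendsto_nhds_unique (hW a) (tendsto_const_nhds.congr' (hev.mono fun _ h => h.symm))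
  · obtain ⟨F, hF⟩ := ((hW e).eventually (gt_mem_nhds (lt_add_of_pos_right _ hε))).exists
    obtain ⟨c, hc, hec, hmc⟩ := hm_cover F
    exact ⟨c, hc, hec, hmc ▸ hF⟩

end FAM

theorem SmoothOn.exists_between {X : Type u} {D₀ D₁ : Set (Set X)} (hD₀ : IsSetAlgebra D₀)
    {μ : FAM X D₀} (hμ : SmoothOn D₀ D₁ μ.val) {e : Set X} (he : e ∈ D₁) {ε : ℝ}
    (hε : 0 < ε) :
    ∃ θ₁ ∈ D₀, ∃ θ₂ ∈ D₀, θ₁ ⊆ e ∧ e ⊆ θ₂ ∧ μ.val θ₂ - μ.val θ₁ < ε := by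
  obtain ⟨W₁, hW₁, hc₁⟩ := μ.exists_extension hD₀ e
  obtain ⟨W₂, hW₂, hc₂⟩ := μ.exists_extension hD₀ eᶜ
  have heq : W₁.val e = W₂.val e :=
    hμ.2 (W₁.restrict (subset_univ D₁)) (W₂.restrict (subset_univ D₁)) hW₁ hW₂ e he
  have hW₂e : W₂.val eᶜ = 1 - W₂.val e := W₂.val_compl_s8 isSetAlgebra_univ trivial
  obtain ⟨c₁, hc₁D, hec₁, hμc₁⟩ := hc₁ (ε / 2) (half_pos hε)
  obtain ⟨c₂, hc₂D, hec₂, hμc₂⟩ := hc₂ (ε / 2) (half_pos hε)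
  refine ⟨c₂ᶜ, hD₀.compl_mem hc₂D, c₁, hc₁D, compl_subset_comm.mp hec₂, hec₁, ?_⟩
  rw [μ.val_compl_s8 hD₀ hc₂D]
  linarith

section Definability

variable {L : FirstOrder.Language} {M : Type*} [L.Structure M] {A : Set M}

theorem _root_.FirstOrder.Language.Formula.realize_congr {γ : Type*} [DecidableEq γ]
    {φ : L.Formula γ} {v v' : γ → M} (h : ∀ i ∈ φ.freeVarFinset, v i = v' i) :
    φ.Realize v ↔ φ.Realize v' := by
  have hv : v ∘ ((↑) : ↥(φ.freeVarFinset : Set γ) → γ) = v' ∘ (↑) :=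
    funext fun i => h i i.2
  simp only [Formula.Realize]
  rw [← BoundedFormula.realize_restrictFreeVar' subset_rfl, hv,
    BoundedFormula.realize_restrictFreeVar']

/-- `σ` sends each variable of `S` either to a parameter from `A` or to a new variable. -/
theorem _root_.Set.Definable.preimage_subst {γ δ : Type*} {S : Set (γ → M)}
    (hS : A.Definable L S) (σ : γ → A ⊕ δ) :
    A.Definable L {w : δ → M | Sum.elim (↑) w ∘ σ ∈ S} := by
  obtain ⟨φ, rfl⟩ := definable_iff_exists_formula_sum.mp hS
  refine definable_iff_exists_formula_sum.mpr ⟨φ.relabel (Sum.elim Sum.inl σ), ?_⟩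
  ext w
  have hcomp : Sum.elim ((↑) : A → M) w ∘ Sum.elim Sum.inl σ =
      Sum.elim (↑) (Sum.elim (↑) w ∘ σ) := by
    ext (a | c) <;> rfl
  simp [Formula.realize_relabel, hcomp]

theorem _root_.Set.Definable.exists_finset_dependsOn {γ : Type*} {S : Set (γ → M)}
    (hS : A.Definable L S) : ∃ F : Finset γ, DependsOn (· ∈ S) (F : Set γ) := by
  obtain ⟨φ, rfl⟩ := definable_iff_exists_formula_sum.mp hS
  refine ⟨φ.freeVarFinset.toRight, fun v v' h => propext (Formula.realize_congr ?_)⟩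
  rintro (a | c) hc
  · rfl
  · exact h c (Finset.mem_toRight.mpr hc)

theorem _root_.Set.Definable.exists_of_nonempty [Nonempty M] {α β : Type*}
    {S : Set ((α ⊕ β) → M)} (hS : A.Definable L S) :
    A.Definable L {v : α → M | ∃ u : β → M, Sum.elim v u ∈ S} := by
  obtain ⟨F, hF⟩ := hS.exists_finset_dependsOn
  -- `S` only sees the coordinates in `F`, so `u` may be replaced by a function of finitely many
  -- variables (`none` stands for all the coordinates outside `F`).
  let τ : β → Option F.toRight := fun y => if h : y ∈ F.toRight then some ⟨y, h⟩ else none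
  convert (hS.preimage_comp (Sum.map id τ)).exists_of_finite using 1
  ext v
  simp only [mem_ofPred_eq, mem_preimage, Sum.elim_comp_map, Function.comp_id]
  constructor
  · rintro ⟨u, hu⟩
    refine ⟨fun o => o.elim (Classical.arbitrary M) fun y => u y, Eq.mp (hF ?_) hu⟩
    rintro (a | y) hy
    · rfl
    · simp [τ, Finset.mem_coe.mp hy]
  · rintro ⟨w, hw⟩
    exact ⟨w ∘ τ, hw⟩

end Definability

open Cardinal in
theorem mk_union_add_aleph0_le {X : Type u} (s : Set X) {t : Set X} (ht : t.Finite) :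
    #↥(s ∪ t) + ℵ₀ ≤ #s + ℵ₀ :=
  calc #↥(s ∪ t) + ℵ₀ ≤ #s + ℵ₀ + ℵ₀ := by
        gcongr
        exact (mk_union_le s t).trans (add_le_add_right ht.lt_aleph0.le _)
    _ = #s + ℵ₀ := by rw [add_assoc, aleph0_add_aleph0]

section Saturation

variable {L : FirstOrder.Language.{u, u}} {U : Type u} [L.Structure U] {κ : Cardinal.{u}}

theorem IsMonster.iInter_nonempty_fin_one (hMon : IsMonster L U κ) {A : Set U}
    (hA : Cardinal.mk A < κ) {ι : Type*} {S : ι → Set (Fin 1 → U)}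
    (hS : ∀ i, A.Definable L (S i)) (hfin : ∀ T : Finset ι, (⋂ i ∈ T, S i).Nonempty) :
    (⋂ i, S i).Nonempty := by
  let Φ : Set ((L[[A]]).Formula (Fin 1)) := {φ | ∃ i, S i = Set.ofPred φ.Realize}
  obtain ⟨b, hb⟩ := hMon.1 A hA Φ fun Φ₀ hΦ₀ => by
    choose idx hidx using fun φ : Φ₀ => hΦ₀ φ.2
    obtain ⟨b, hb⟩ := hfin (Finset.univ.image idx)
    refine ⟨b, fun φ hφ => ?_⟩
    have h := mem_iInter₂.mp hb (idx ⟨φ, hφ⟩) (Finset.mem_image_of_mem _ (Finset.mem_univ _))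
    rwa [hidx] at h
  refine ⟨b, mem_iInter.mpr fun i => ?_⟩
  obtain ⟨φ, hφ⟩ := hS i
  rw [hφ]
  exact hb φ ⟨i, hφ⟩

theorem IsMonster.iInter_nonempty (hMon : IsMonster L U κ) {k : ℕ} {A : Set U}
    (hA : Cardinal.mk A + Cardinal.aleph0 < κ) {ι : Type*} {S : ι → Set (Fin k → U)}
    (hS : ∀ i, A.Definable L (S i)) (hfin : ∀ T : Finset ι, (⋂ i ∈ T, S i).Nonempty) :
    (⋂ i, S i).Nonempty := by
  induction k generalizing A with
  | zero =>
    refine ⟨default, mem_iInter.mpr fun i => ?_⟩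
    obtain ⟨v, hv⟩ := hfin {i}
    rw [Subsingleton.elim default v]
    simpa using hv
  | succ k ih =>
    -- realize the projections to the first coordinate, then the slices over that point
    let P : Finset ι → Set (Fin 1 → U) := fun T =>
      (fun g : Fin (k + 1) → U => g ∘ fun _ => 0) '' ⋂ i ∈ T, S i
    obtain ⟨u, hu⟩ := hMon.iInter_nonempty_fin_one (lt_of_le_of_lt le_self_add hA)
      (S := P) (fun T => (definable_biInter_finset hS T).image_comp _) fun 𝒯 => by
        obtain ⟨g, hg⟩ := hfin (𝒯.biUnion id)
        refine ⟨g ∘ fun _ => 0, mem_iInter₂.mpr fun T hT => ⟨g, ?_, rfl⟩⟩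
        exact mem_iInter₂.mpr fun i hi =>
          mem_iInter₂.mp hg i (Finset.mem_biUnion.mpr ⟨T, hT, hi⟩)
    let σ : Fin (k + 1) → ↥(insert (u 0) A) ⊕ Fin k :=
      Fin.cons (Sum.inl ⟨u 0, mem_insert _ _⟩) Sum.inr
    have hσ : ∀ r : Fin k → U, Sum.elim (↑) r ∘ σ = Fin.cons (u 0) r := fun r => by
      simp [σ, Fin.comp_cons]
    have hA' : Cardinal.mk ↥(insert (u 0) A) + Cardinal.aleph0 < κ := by
      rw [← union_singleton]
      exact (mk_union_add_aleph0_le A (finite_singleton _)).trans_lt hA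
    obtain ⟨r, hr⟩ := ih (S := fun i => {r | Fin.cons (u 0) r ∈ S i}) hA'
      (fun i => by
        simpa only [hσ] using ((hS i).mono (subset_insert _ _)).preimage_subst σ)
      fun T => by
        obtain ⟨g, hg, hgu⟩ := mem_iInter.mp hu T
        refine ⟨Fin.tail g, mem_iInter₂.mpr fun i hi => ?_⟩
        have hg0 : g 0 = u 0 := congrFun hgu 0
        simpa [← hg0] using mem_iInter₂.mp hg i hi
    exact ⟨Fin.cons (u 0) r, mem_iInter.mpr fun i => mem_iInter.mp hr i⟩

end Saturation

section Compactness

variable {L : FirstOrder.Language.{u, u}} {U : Type u} [L.Structure U] {κ : Cardinal.{u}}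

theorem IsMonster.exists_finset_iUnion_eq_univ (hMon : IsMonster L U κ) {A : Set U}
    (hA : Cardinal.mk A + Cardinal.aleph0 < κ) (hAne : A.Nonempty) {β ι : Type*}
    {G : Finset β} {C : ι → Set (β → U)} (hC : ∀ i, A.Definable L (C i))
    (hdep : ∀ i, DependsOn (· ∈ C i) (G : Set β)) (hcover : ⋃ i, C i = univ) :
    ∃ T : Finset ι, ⋃ i ∈ T, C i = univ := by
  obtain ⟨u₀, hu₀⟩ := hAne
  -- transport everything to the finitely many coordinates in `G`, filling the others with `u₀`
  let σ : β → A ⊕ Fin G.card := fun y =>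
    if h : y ∈ G then Sum.inr (G.equivFin ⟨y, h⟩) else Sum.inl ⟨u₀, hu₀⟩
  let ext : (Fin G.card → U) → β → U := fun v => Sum.elim (↑) v ∘ σ
  have hext : ∀ (b : β → U) i, ext (b ∘ (↑) ∘ G.equivFin.symm) ∈ C i ↔ b ∈ C i := by
    intro b i
    refine iff_of_eq (hdep i fun y hy => ?_)
    simp [ext, σ, Finset.mem_coe.mp hy]
  by_contra! hT
  obtain ⟨v, hv⟩ := hMon.iInter_nonempty hA (S := fun i => {v | ext v ∈ C i}ᶜ)
    (fun i => ((hC i).preimage_subst σ).compl) fun T => by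
      obtain ⟨b, hb⟩ := (ne_univ_iff_exists_notMem _).mp (hT T)
      refine ⟨b ∘ (↑) ∘ G.equivFin.symm, mem_iInter₂.mpr fun i hi => ?_⟩
      simpa [hext] using fun h => hb (mem_iUnion₂.mpr ⟨i, hi, h⟩)
  obtain ⟨i, hi⟩ := mem_iUnion.mp (hcover ▸ mem_univ (ext v))
  exact mem_iInter.mp hv i hi

end Compactness

theorem isSetAlgebra_dset (L : FirstOrder.Language.{u, u}) {U : Type u} [L.Structure U]
    (A : Set U) (α : Type u) : IsSetAlgebra (Dset L A α) :=
  ⟨definable_empty, fun _ hs => hs.compl, fun _ _ hs ht => hs.union ht⟩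

section Approximation

variable {L : FirstOrder.Language.{u, u}} {U : Type u} [L.Structure U] {κ : Cardinal.{u}}
  {M : Set U} {α β : Type u}

theorem definable_fiber {s : Set ((α ⊕ β) → U)} (hs : univ.Definable L s) (b : β → U) :
    univ.Definable L {a : α → U | Sum.elim a b ∈ s} := by
  convert hs.preimage_subst (Sum.elim Sum.inr fun y => Sum.inl ⟨b y, trivial⟩) using 3 with a
  congr! 1
  ext (x | y) <;> rfl

theorem definable_setOf_subset_fiber_subset [Nonempty U] {A : Set U}
    {s : Set ((α ⊕ β) → U)} (hs : A.Definable L s) {θ₁ θ₂ : Set (α → U)}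
    (hθ₁ : A.Definable L θ₁) (hθ₂ : A.Definable L θ₂) :
    A.Definable L {b : β → U | θ₁ ⊆ {a | Sum.elim a b ∈ s} ∧ {a | Sum.elim a b ∈ s} ⊆ θ₂} := by
  let s' : Set ((β ⊕ α) → U) := (· ∘ Sum.swap) ⁻¹' s
  have hbad : A.Definable L {w : (β ⊕ α) → U |
      (w ∘ Sum.inr ∈ θ₁ ∧ w ∉ s') ∨ (w ∈ s' ∧ w ∘ Sum.inr ∉ θ₂)} :=
    ((hθ₁.preimage_comp _).inter (hs.preimage_comp _).compl).union
      ((hs.preimage_comp _).inter (hθ₂.preimage_comp _).compl)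
  convert hbad.exists_of_nonempty.compl using 1
  ext b
  simp only [s', subset_def, mem_compl_iff, mem_ofPred_eq, mem_preimage, Sum.elim_swap,
    Sum.elim_comp_inr, not_exists, not_or, not_and, not_not]
  exact ⟨fun ⟨h₁, h₂⟩ a => ⟨h₁ a, h₂ a⟩, fun h => ⟨fun a => (h a).1, fun a => (h a).2⟩⟩

theorem exists_definable_partition {A : Set U} {γ ι : Type*} {C : ι → Set (γ → U)}
    (hC : ∀ i, A.Definable L (C i)) {T : Finset ι} (hT : ⋃ i ∈ T, C i = univ) :
    ∃ (n : ℕ) (g : Fin n → ι) (ψ : Fin n → Set (γ → U)), (∀ j, A.Definable L (ψ j)) ∧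
      Pairwise (Disjoint on ψ) ∧ ⋃ j, ψ j = univ ∧ ∀ j, ψ j ⊆ C (g j) := by
  let g : Fin T.card → ι := fun j => T.equivFin.symm j
  refine ⟨T.card, g, disjointed (C ∘ g),
    fun j => disjointedRec (fun _ _ ht => ht.sdiff (hC _)) (hC (g j)), disjoint_disjointed _,
    ?_, disjointed_subset _⟩
  rw [iUnion_disjointed]
  refine eq_univ_of_forall fun b => ?_
  obtain ⟨i, hiT, hb⟩ := mem_iUnion₂.mp (hT ▸ mem_univ b)
  exact mem_iUnion.mpr ⟨T.equivFin ⟨i, hiT⟩, by simpa [g] using hb⟩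

theorem exists_fiber_approx (hMon : IsMonster L U κ) (hMne : M.Nonempty)
    (hMsmall : SmallSet L κ M) {μ : KMeasure L M α}
    (hμ : SmoothOn (Dset L M α) (Dset L univ α) μ.val) {s : Set ((α ⊕ β) → U)}
    (hs : univ.Definable L s) {ε : ℝ} (hε : 0 < ε) :
    ∃ (n : ℕ) (ψ : Fin n → Set (β → U)) (θ₁ θ₂ : Fin n → Set (α → U)),
      (∀ i, ψ i ∈ Dset L univ β) ∧ Pairwise (Disjoint on ψ) ∧ ⋃ i, ψ i = univ ∧
      (∀ i, θ₁ i ∈ Dset L M α) ∧ (∀ i, θ₂ i ∈ Dset L M α) ∧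
      (∀ i, ∀ b ∈ ψ i, θ₁ i ⊆ {a | Sum.elim a b ∈ s} ∧ {a | Sum.elim a b ∈ s} ⊆ θ₂ i) ∧
      ∀ i, μ.val (θ₂ i) - μ.val (θ₁ i) < ε := by
  have : Nonempty U := ⟨hMne.some⟩
  obtain ⟨C₀, -, hsC₀⟩ := definable_iff_finitely_definable.mp hs
  set A := M ∪ C₀
  have hMA : M ⊆ A := subset_union_left
  have hsA : A.Definable L s := hsC₀.mono subset_union_right
  have hA : Cardinal.mk A + Cardinal.aleph0 < κ :=
    (mk_union_add_aleph0_le M C₀.finite_toSet).trans_lt (lt_of_le_of_lt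
      (show _ ≤ Cardinal.mk M + L.card + Cardinal.aleph0 by gcongr; exact le_self_add) hMsmall)
  obtain ⟨F, hF⟩ := hsA.exists_finset_dependsOn
  have hfiber_dep : ∀ b b' : β → U, (∀ y ∈ F.toRight, b y = b' y) →
      {a : α → U | Sum.elim a b ∈ s} = {a | Sum.elim a b' ∈ s} := by
    intro b b' h
    ext a
    refine iff_of_eq (hF ?_)
    rintro (x | y) hy
    · rfl
    · exact h y (Finset.mem_toRight.mpr hy)
  let ι := {θ : Set (α → U) × Set (α → U) //
    θ.1 ∈ Dset L M α ∧ θ.2 ∈ Dset L M α ∧ μ.val θ.2 - μ.val θ.1 < ε}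
  let C : ι → Set (β → U) := fun θ =>
    {b | θ.1.1 ⊆ {a | Sum.elim a b ∈ s} ∧ {a | Sum.elim a b ∈ s} ⊆ θ.1.2}
  have hC : ∀ θ : ι, A.Definable L (C θ) := fun θ =>
    definable_setOf_subset_fiber_subset hsA (θ.2.1.mono hMA) (θ.2.2.1.mono hMA)
  have hdep : ∀ θ, DependsOn (· ∈ C θ) (F.toRight : Set β) := fun θ b b' h => by
    simp only [C, mem_ofPred_eq]
    rw [hfiber_dep b b' h]
  have hcover : ⋃ θ, C θ = univ := by
    refine eq_univ_of_forall fun b => mem_iUnion.mpr ?_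
    obtain ⟨θ₁, hθ₁, θ₂, hθ₂, h₁, h₂, hgap⟩ :=
      hμ.exists_between (isSetAlgebra_dset L M α) (definable_fiber hs b) hε
    exact ⟨⟨(θ₁, θ₂), hθ₁, hθ₂, hgap⟩, h₁, h₂⟩
  obtain ⟨T, hT⟩ := hMon.exists_finset_iUnion_eq_univ hA (hMne.mono hMA) hC hdep hcover
  obtain ⟨n, g, ψ, hψ, hdisj, hψcover, hψC⟩ :=
    exists_definable_partition (fun θ => (hC θ).mono (subset_univ A)) hT
  exact ⟨n, ψ, fun j => (g j).1.1, fun j => (g j).1.2, hψ, hdisj, hψcover,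
    fun j => (g j).2.1, fun j => (g j).2.2.1, fun j b hb => hψC j hb, fun j => (g j).2.2.2⟩

end Approximation

section Rectangles

variable {L : FirstOrder.Language.{u, u}} {U : Type u} [L.Structure U] {M : Set U}
  {α β : Type u}

theorem definable_cylL {A : Set U} {θ : Set (α → U)} (hθ : A.Definable L θ) :
    A.Definable L (cylL β θ) :=
  hθ.preimage_comp Sum.inl

theorem definable_cylR {A : Set U} {t : Set (β → U)} (ht : A.Definable L t) :
    A.Definable L (cylR α t) :=
  ht.preimage_comp Sum.inr

theorem cylL_inter_cylR_univ (θ : Set (α → U)) : cylL β θ ∩ cylR α univ = cylL β θ :=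
  inter_univ _

theorem SepAmalgamOn.congr {ω W : Set ((α ⊕ β) → U) → ℝ} {f : Set (α → U) → ℝ}
    {g : Set (β → U) → ℝ} (hω : SepAmalgamOn L M ω f g) (hW : agreeOn (Dset L M (α ⊕ β)) W ω) :
    SepAmalgamOn L M W f g := fun θ t hθ ht =>
  (hW _ ((definable_cylL hθ).inter (definable_cylR ht))).trans (hω θ t hθ ht)

noncomputable def condMarginalR (W : KMeasure L (univ : Set U) (α ⊕ β)) {θ : Set (α → U)}
    (hθ : θ ∈ Dset L (univ : Set U) α) (hpos : 0 < W.val (cylL β θ)) :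
    KMeasure L (univ : Set U) β where
  val t := W.val (cylL β θ ∩ cylR α t) / W.val (cylL β θ)
  nonneg t ht := div_nonneg (W.nonneg _ ((definable_cylL hθ).inter (definable_cylR ht))) hpos.le
  isProb := by simp only [cylL_inter_cylR_univ, div_self hpos.ne']
  additive t t' ht ht' htt' := by
    rw [← add_div, ← W.additive _ _ ((definable_cylL hθ).inter (definable_cylR ht))
      ((definable_cylL hθ).inter (definable_cylR ht'))
      ((htt'.preimage _).mono inter_subset_right inter_subset_right)]
    simp only [cylR, ← inter_union_distrib_left, ← ofPred_or, mem_union]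

theorem val_cylL_inter_cylR {μ : KMeasure L M α} {ν : KMeasure L M β}
    (hν : SmoothOn (Dset L M β) (Dset L (univ : Set U) β) ν.val)
    {ν' : KMeasure L (univ : Set U) β} (hν' : agreeOn (Dset L M β) ν'.val ν.val)
    {W : KMeasure L (univ : Set U) (α ⊕ β)}
    (hW : SepAmalgamOn L M W.val μ.val ν.val) {θ : Set (α → U)} (hθ : θ ∈ Dset L M α)
    {ψ : Set (β → U)} (hψ : ψ ∈ Dset L (univ : Set U) β) :
    W.val (cylL β θ ∩ cylR α ψ) = μ.val θ * ν'.val ψ := by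
  have hWθ : W.val (cylL β θ) = μ.val θ := by
    simpa [cylL_inter_cylR_univ, ν.isProb] using hW θ univ hθ definable_univ
  have hθu : θ ∈ Dset L (univ : Set U) α := hθ.mono (subset_univ M)
  rcases (μ.nonneg θ hθ).eq_or_lt with hzero | hpos
  · have hrect := (definable_cylL (β := β) hθu).inter (definable_cylR (α := α) hψ)
    have hle := W.val_mono (isSetAlgebra_dset L (univ : Set U) (α ⊕ β)) hrect (definable_cylL hθu)
      inter_subset_left
    have hge := W.nonneg _ hrect
    rw [hWθ, ← hzero] at hle
    rw [← hzero, zero_mul]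
    linarith
  · -- conditioning `W` on `θ` extends `ν`, so smoothness identifies it with `ν'`
    have hpos' : 0 < W.val (cylL β θ) := hWθ ▸ hpos
    have hcond : agreeOn (Dset L M β) (condMarginalR W hθu hpos').val ν.val := fun t ht => by
      simp only [condMarginalR, hW θ t hθ ht, hWθ]
      field_simp
    have h := hν.2 _ _ hcond hν' ψ hψ
    simp only [condMarginalR, hWθ] at h
    rw [← h]
    field_simp

theorem val_mem_Icc_of_fiber_approx {μ : KMeasure L M α} {ν' : KMeasure L (univ : Set U) β}
    {W : KMeasure L (univ : Set U) (α ⊕ β)}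
    (hrect : ∀ θ ∈ Dset L M α, ∀ ψ ∈ Dset L (univ : Set U) β,
      W.val (cylL β θ ∩ cylR α ψ) = μ.val θ * ν'.val ψ)
    {s : Set ((α ⊕ β) → U)} (hs : s ∈ Dset L (univ : Set U) (α ⊕ β)) {n : ℕ}
    {ψ : Fin n → Set (β → U)} {θ₁ θ₂ : Fin n → Set (α → U)}
    (hψ : ∀ i, ψ i ∈ Dset L (univ : Set U) β) (hdisj : Pairwise (Disjoint on ψ))
    (hcover : ⋃ i, ψ i = univ)
    (hθ₁ : ∀ i, θ₁ i ∈ Dset L M α) (hθ₂ : ∀ i, θ₂ i ∈ Dset L M α)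
    (hfiber : ∀ i, ∀ b ∈ ψ i, θ₁ i ⊆ {a | Sum.elim a b ∈ s} ∧ {a | Sum.elim a b ∈ s} ⊆ θ₂ i) :
    W.val s ∈ Icc (∑ i, μ.val (θ₁ i) * ν'.val (ψ i)) (∑ i, μ.val (θ₂ i) * ν'.val (ψ i)) := by
  have hD := isSetAlgebra_dset L (univ : Set U) (α ⊕ β)
  have hpiece : ∀ i, s ∩ cylR α (ψ i) ∈ Dset L (univ : Set U) (α ⊕ β) :=
    fun i => hs.inter (definable_cylR (hψ i))
  have hrect_mem : ∀ {θ}, θ ∈ Dset L M α → ∀ i,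
      cylL β θ ∩ cylR α (ψ i) ∈ Dset L (univ : Set U) (α ⊕ β) :=
    fun hθ i => (definable_cylL (hθ.mono (subset_univ M))).inter (definable_cylR (hψ i))
  have hcoverR : ⋃ i, cylR α (ψ i) = univ := eq_univ_of_forall fun h => by
    obtain ⟨i, hi⟩ := mem_iUnion.mp (hcover.symm ▸ mem_univ (h ∘ Sum.inr))
    exact mem_iUnion.mpr ⟨i, hi⟩
  have hsplit : ∀ h : (α ⊕ β) → U, Sum.elim (h ∘ Sum.inl) (h ∘ Sum.inr) ∈ s ↔ h ∈ s :=
    fun h => by rw [Sum.elim_comp_inl_inr]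
  rw [W.val_eq_sum_inter hD (P := fun i => cylR α (ψ i))
    (fun i j hij => (hdisj hij).preimage _) hcoverR hpiece]
  constructor <;> refine Finset.sum_le_sum fun i _ => ?_
  · rw [← hrect _ (hθ₁ i) _ (hψ i)]
    refine W.val_mono hD (hrect_mem (hθ₁ i) i) (hpiece i) fun h ⟨h₁, h₂⟩ => ⟨?_, h₂⟩
    exact (hsplit h).mp ((hfiber i _ h₂).1 h₁)
  · rw [← hrect _ (hθ₂ i) _ (hψ i)]
    refine W.val_mono hD (hpiece i) (hrect_mem (hθ₂ i) i) fun h ⟨h₁, h₂⟩ => ⟨?_, h₂⟩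
    exact (hfiber i _ h₂).2 ((hsplit h).mpr h₁)

end Rectangles

/-- If `μ(x)` and `ν(y)` are smooth Keisler measures over a small model
`M`, then their (unique) separated amalgam `μ × ν` is smooth over `M`. -/
theorem statement_8
    (L : FirstOrder.Language.{u, u}) (U : Type u) [L.Structure U]
    (κ : Cardinal.{u}) (hMon : IsMonster L U κ)
    (Mset : Set U) (hM : IsElemSubset L U Mset) (hMsmall : SmallSet L κ Mset)
    (α β : Type u) (μ : KMeasure L Mset α) (ν : KMeasure L Mset β)
    (hμ : SmoothOn (Dset L Mset α) (Dset L (Set.univ : Set U) α) μ.val)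
    (hν : SmoothOn (Dset L Mset β) (Dset L (Set.univ : Set U) β) ν.val) :
    ∀ ω : KMeasure L Mset (α ⊕ β), SepAmalgamOn L Mset ω.val μ.val ν.val →
      SmoothOn (Dset L Mset (α ⊕ β)) (Dset L (Set.univ : Set U) (α ⊕ β)) ω.val := by
  intro ω hω
  refine ⟨?_, fun W₁ W₂ hW₁ hW₂ s hs => eq_of_forall_dist_le fun ε hε => ?_⟩
  · obtain ⟨W, hW, -⟩ := ω.exists_extension (isSetAlgebra_dset L Mset (α ⊕ β)) ∅
    exact ⟨W.restrict (subset_univ _), hW⟩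
  obtain ⟨ν', hν'⟩ := hν.1
  obtain ⟨n, ψ, θ₁, θ₂, hψ, hdisj, hcover, hθ₁, hθ₂, hfiber, hgap⟩ :=
    exists_fiber_approx hMon hM.1 hMsmall hμ hs hε
  obtain ⟨hlo₁, hhi₁⟩ := val_mem_Icc_of_fiber_approx
    (fun θ hθ ψ hψ => val_cylL_inter_cylR hν hν' (hω.congr hW₁) hθ hψ)
    hs hψ hdisj hcover hθ₁ hθ₂ hfiber
  obtain ⟨hlo₂, hhi₂⟩ := val_mem_Icc_of_fiber_approx
    (fun θ hθ ψ hψ => val_cylL_inter_cylR hν hν' (hω.congr hW₂) hθ hψ)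
    hs hψ hdisj hcover hθ₁ hθ₂ hfiber
  have hwidth : ∑ i, μ.val (θ₂ i) * ν'.val (ψ i) - ∑ i, μ.val (θ₁ i) * ν'.val (ψ i) ≤ ε := by
    simp only [← Finset.sum_sub_distrib, ← sub_mul]
    exact ν'.sum_mul_val_le (isSetAlgebra_dset L univ β) hψ hdisj hcover fun i => (hgap i).le
  rw [Real.dist_eq, abs_sub_le_iff]
  constructor <;> linarith

end KeislerPaper
end

section
/- Let ℬ be a finite Boolean algebra of first-order formulas in the variables xy (with parameters, formulas taken up to logical equivalence). Then there exists a finite Boolean algebra 𝒞 of formulas containing ℬ such that 𝒞 is closed under ∃y: for every φ(x,y) ∈ 𝒞, the formula (∃y)φ(x,y) belongs to 𝒞 (up to logical equivalence). -/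
/-!
Take for `𝒞` the sets that never separate two points lying in the same members of the finite
family `B ∪ {∃y b | b ∈ B}`, i.e. the unions of cells of that family; this is a finite Boolean
algebra of definable sets containing `B`. It is closed under `∃y`: suppose `x` and `x'` lie
in the same cells and `(x, b) ∈ s ∈ 𝒞`, and let `a` be the atom of `B` containing `(x, b)`.
Then `x ∈ ∃y a`, hence `x' ∈ ∃y a`, say `(x', b') ∈ a`. The points `(x, b)` and `(x', b')` lie
in the same members of `B` because `a` is an atom, and in the same sets `∃y c` because these
do not depend on `y`; hence `(x', b') ∈ s` and `x' ∈ ∃y s`.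
-/

namespace KeislerPaper

open FirstOrder FirstOrder.Language Set MeasureTheory
open scoped ENNReal Classical

universe u v

section CellAlgebra

variable {X : Type u} {ι : Type*}

def memPattern (G : ι → Set X) (x : X) : ι → Prop := fun i => x ∈ G i

def cellAlgebra (G : ι → Set X) : Set (Set X) :=
  {s | ∀ x y, memPattern G x = memPattern G y → x ∈ s → y ∈ s}

variable {G : ι → Set X}

lemma isBoolAlg_cellAlgebra : IsBoolAlg (cellAlgebra G) :=
  ⟨fun _ _ _ _ => trivial,
    fun _ hs x y hxy hx hy => hx (hs y x hxy.symm hy),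
    fun _ hs _ ht x y hxy hx => ⟨hs x y hxy hx.1, ht x y hxy hx.2⟩⟩

lemma mem_cellAlgebra (i : ι) : G i ∈ cellAlgebra G :=
  fun _ _ hxy => (congrFun hxy i).mp

lemma preimage_image_memPattern {s : Set X} (hs : s ∈ cellAlgebra G) :
    memPattern G ⁻¹' (memPattern G '' s) = s :=
  Subset.antisymm (fun _ ⟨x, hx, hxy⟩ => hs x _ hxy hx) (subset_preimage_image _ _)

lemma cellAlgebra_finite [Finite ι] : (cellAlgebra G).Finite :=
  (Set.finite_range fun P => memPattern G ⁻¹' P).subset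
    fun _ hs => ⟨_, preimage_image_memPattern hs⟩

end CellAlgebra

lemma definable_preimage_memPattern {L : FirstOrder.Language.{u, u}} {U : Type u}
    [L.Structure U] {A : Set U} {α : Type u} {ι : Type*} [Finite ι] {G : ι → Set (α → U)}
    (hG : ∀ i, A.Definable L (G i)) (P : Set (ι → Prop)) :
    A.Definable L (memPattern G ⁻¹' P) := by
  have hfiber : ∀ p : ι → Prop, A.Definable L (memPattern G ⁻¹' {p}) := fun p => by
    have : memPattern G ⁻¹' {p} = ⋂ i, {x | (x ∈ G i) = p i} := by
      ext x
      simp only [mem_preimage, mem_singleton_iff, mem_iInter, funext_iff, memPattern,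
        mem_ofPred_eq]
    rw [this]
    refine definable_iInter_of_finite fun i => ?_
    by_cases hp : p i
    · simpa [hp] using hG i
    · convert (hG i).compl using 1
      ext x
      simp [hp]
  rw [← biUnion_preimage_singleton, biUnion_eq_iUnion]
  exact definable_iUnion_of_finite fun p => hfiber p

lemma IsBoolAlg.sInter_mem {X : Type u} {B S : Set (Set X)} (hB : IsBoolAlg B)
    (hS : S.Finite) (hSB : S ⊆ B) : ⋂₀ S ∈ B := by
  induction S, hS using Set.Finite.induction_on with
  | empty => simpa using hB.1
  | insert _ _ ih =>
    rw [sInter_insert]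
    exact hB.2.2 _ (hSB (mem_insert _ _)) _ (ih ((subset_insert _ _).trans hSB))

lemma IsBoolAlg.exists_atom {X : Type u} {B : Set (Set X)} (hB : IsBoolAlg B)
    (hfin : B.Finite) (z : X) :
    ∃ a ∈ B, z ∈ a ∧ ∀ z' ∈ a, ∀ c ∈ B, z' ∈ c ↔ z ∈ c := by
  refine ⟨⋂₀ {c ∈ B | z ∈ c},
    hB.sInter_mem (hfin.subset (sep_subset _ _)) (sep_subset _ _),
    mem_sInter.mpr fun _ hc => hc.2, fun z' hz' c hc => ⟨fun hz'c => ?_, fun hzc => ?_⟩⟩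
  · by_contra hzc
    exact mem_sInter.mp hz' cᶜ ⟨hB.2.1 c hc, hzc⟩ hz'c
  · exact mem_sInter.mp hz' c ⟨hc, hzc⟩

section ExistsY

variable {L : FirstOrder.Language.{u, u}} {U : Type u} [L.Structure U] {A : Set U}
  {α β : Type u}

lemma Formula.realize_congr_of_freeVarFinset {γ : Type*} [DecidableEq γ] (φ : L.Formula γ)
    {v w : γ → U} (h : ∀ x ∈ φ.freeVarFinset, v x = w x) : φ.Realize v ↔ φ.Realize w :=
  (BoundedFormula.realize_restrictFreeVar (f := ((↑) : φ.freeVarFinset → γ)) v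
    fun _ => rfl).symm.trans (BoundedFormula.realize_restrictFreeVar w fun x => h x x.2)

lemma definable_exY {s : Set ((α ⊕ β) → U)} (hs : A.Definable L s) :
    A.Definable L (exY s) := by
  obtain ⟨φ, rfl⟩ := id hs
  -- Only the finitely many free `y`-variables of `φ` are quantified; the others stay free.
  let Fβ : Set β := Sum.inr ⁻¹' (φ.freeVarFinset : Set (α ⊕ β))
  have : Finite Fβ := (φ.freeVarFinset.finite_toSet.preimage Sum.inr_injective.injOn).to_subtype
  let f : α ⊕ β → (α ⊕ β) ⊕ Fβ :=
    Sum.elim (Sum.inl ∘ Sum.inl) fun y =>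
      if hy : y ∈ Fβ then Sum.inr ⟨y, hy⟩ else Sum.inl (Sum.inr y)
  convert (hs.preimage_comp f).exists_of_finite using 1
  ext h
  simp only [exY, mem_ofPred_eq, mem_preimage]
  constructor
  · rintro ⟨b, hb⟩
    refine ⟨fun y => b y, (Formula.realize_congr_of_freeVarFinset φ ?_).mp hb⟩
    rintro (a | y) hy
    · rfl
    · simp [f, show y ∈ Fβ from hy]
  · rintro ⟨c, hc⟩
    refine ⟨fun y => if hy : y ∈ Fβ then c ⟨y, hy⟩ else h (Sum.inr y), ?_⟩
    convert hc using 2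
    ext (a | y)
    · rfl
    · by_cases hy : y ∈ Fβ <;> simp [f, hy]

lemma mem_exY_congr {s : Set ((α ⊕ β) → U)} {h h' : (α ⊕ β) → U}
    (hh : ∀ a, h (Sum.inl a) = h' (Sum.inl a)) : h ∈ exY s ↔ h' ∈ exY s := by
  simp only [exY, mem_ofPred_eq, hh]

end ExistsY

section ExistsYClosure

variable {U : Type u} {α β : Type u}

def withExY (B : Set (Set ((α ⊕ β) → U))) : B ⊕ B → Set ((α ⊕ β) → U) :=
  Sum.elim Subtype.val (exY ∘ Subtype.val)

lemma exY_mem_cellAlgebra_withExY {B : Set (Set ((α ⊕ β) → U))} (hB : IsBoolAlg B)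
    (hfin : B.Finite) {s : Set ((α ⊕ β) → U)} (hs : s ∈ cellAlgebra (withExY B)) :
    exY s ∈ cellAlgebra (withExY B) := by
  rintro x x' hxx' ⟨b, hb⟩
  obtain ⟨a, haB, hza, hatom⟩ := hB.exists_atom hfin (Sum.elim (fun a => x (Sum.inl a)) b)
  obtain ⟨b', hb'⟩ : x' ∈ exY a := (congrFun hxx' (Sum.inr ⟨a, haB⟩)).mp ⟨b, hza⟩
  refine ⟨b', hs _ _ (funext fun i => ?_) hb⟩
  rcases i with c | c
  · exact propext (hatom _ hb' c c.2).symm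
  · calc (Sum.elim (fun a => x (Sum.inl a)) b ∈ exY c.1) = (x ∈ exY c.1) :=
          propext (mem_exY_congr fun _ => rfl)
      _ = (x' ∈ exY c.1) := congrFun hxx' (Sum.inr c)
      _ = (Sum.elim (fun a => x' (Sum.inl a)) b' ∈ exY c.1) :=
          propext (mem_exY_congr fun _ => rfl)

end ExistsYClosure

/-- Every finite Boolean algebra of formulas in the variables `xy`
(with parameters, identified with the corresponding algebra of definable sets) is
contained in a finite Boolean algebra of formulas closed under `∃ y`. -/
theorem statement_9
    (L : FirstOrder.Language.{u, u}) (U : Type u) [L.Structure U]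
    (α β : Type u) (B : Set (Set ((α ⊕ β) → U)))
    (hfin : B.Finite) (hdef : ∀ s ∈ B, (Set.univ : Set U).Definable L s)
    (halg : IsBoolAlg B) :
    ∃ C : Set (Set ((α ⊕ β) → U)), B ⊆ C ∧ C.Finite ∧
      (∀ s ∈ C, (Set.univ : Set U).Definable L s) ∧ IsBoolAlg C ∧
      ∀ s ∈ C, exY s ∈ C := by
  have : Finite B := hfin.to_subtype
  have hdefG : ∀ i, (Set.univ : Set U).Definable L (withExY B i) := by
    rintro (c | c)
    · exact hdef c c.2
    · exact definable_exY (hdef c c.2)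
  refine ⟨cellAlgebra (withExY B),
    fun s hs => mem_cellAlgebra (G := withExY B) (Sum.inl ⟨s, hs⟩), cellAlgebra_finite,
    fun s hs => ?_, isBoolAlg_cellAlgebra,
    fun _ => exY_mem_cellAlgebra_withExY halg hfin⟩
  rw [← preimage_image_memPattern hs]
  exact definable_preimage_memPattern hdefG _

end KeislerPaper
end

section
/- Let Δ be a Boolean algebra of formulas in variable x, and let μ be a global Δ-measure which is smooth over a small model M. Then for every φ(x) ∈ Δ(𝒰) and every ε > 0 there exist θ⁻(x), θ⁺(x) ∈ Δ(M) with ⊨ θ⁻(x) → φ(x), ⊨ φ(x) → θ⁺(x), and μ(θ⁺(x)) − μ(θ⁻(x)) < ε. -/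
namespace KeislerPaper

open FirstOrder FirstOrder.Language Set MeasureTheory
open scoped ENNReal Classical

universe u v

section AuxExtension

variable {X : Type*}

lemma IsBoolAlg.univ_mem {D : Set (Set X)} (h : IsBoolAlg D) : Set.univ ∈ D := h.1

lemma IsBoolAlg.compl_mem {D : Set (Set X)} (h : IsBoolAlg D) {a : Set X} (ha : a ∈ D) :
    aᶜ ∈ D := h.2.1 a ha

lemma IsBoolAlg.inter_mem {D : Set (Set X)} (h : IsBoolAlg D) {a b : Set X} (ha : a ∈ D)
    (hb : b ∈ D) : a ∩ b ∈ D := h.2.2 a ha b hb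

lemma IsBoolAlg.empty_mem {D : Set (Set X)} (h : IsBoolAlg D) : (∅ : Set X) ∈ D := by
  have := h.compl_mem h.univ_mem
  rwa [Set.compl_univ] at this

lemma IsBoolAlg.union_mem {D : Set (Set X)} (h : IsBoolAlg D) {a b : Set X} (ha : a ∈ D)
    (hb : b ∈ D) : a ∪ b ∈ D := by
  have : a ∪ b = (aᶜ ∩ bᶜ)ᶜ := by rw [Set.compl_inter, compl_compl, compl_compl]
  rw [this]
  exact h.compl_mem (h.inter_mem (h.compl_mem ha) (h.compl_mem hb))

lemma IsBoolAlg.diff_mem {D : Set (Set X)} (h : IsBoolAlg D) {a b : Set X} (ha : a ∈ D)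
    (hb : b ∈ D) : a \ b ∈ D := by
  rw [Set.diff_eq]; exact h.inter_mem ha (h.compl_mem hb)

/-- A finitely additive probability measure on a Boolean algebra `B` of subsets of `X`. -/
structure IsPMOn (B : Set (Set X)) (f : Set X → ℝ) : Prop where
  alg : IsBoolAlg B
  nonneg : ∀ b ∈ B, 0 ≤ f b
  prob : f Set.univ = 1
  add : ∀ a b : Set X, a ∈ B → b ∈ B → Disjoint a b → f (a ∪ b) = f a + f b

namespace IsPMOn

variable {B : Set (Set X)} {f : Set X → ℝ}

lemma f_empty (hp : IsPMOn B f) : f ∅ = 0 := by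
  have h := hp.add ∅ ∅ hp.alg.empty_mem hp.alg.empty_mem (by simp)
  simp only [Set.union_empty] at h
  linarith

lemma mono (hp : IsPMOn B f) {a b : Set X} (ha : a ∈ B) (hb : b ∈ B) (hab : a ⊆ b) :
    f a ≤ f b := by
  have hd : b \ a ∈ B := hp.alg.diff_mem hb ha
  have h := hp.add a (b \ a) ha hd (Set.disjoint_left.mpr fun x hx hx2 => hx2.2 hx)
  rw [Set.union_diff_cancel hab] at h
  have := hp.nonneg _ hd
  linarith

lemma subadd (hp : IsPMOn B f) {a b : Set X} (ha : a ∈ B) (hb : b ∈ B) :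
    f (a ∪ b) ≤ f a + f b := by
  have hd : b \ a ∈ B := hp.alg.diff_mem hb ha
  have h := hp.add a (b \ a) ha hd (Set.disjoint_left.mpr fun x hx hx2 => hx2.2 hx)
  rw [Set.union_diff_self] at h
  have := hp.mono hd hb Set.diff_subset
  linarith

end IsPMOn

/-- The outer measure associated to `f` on the algebra `B`. -/
noncomputable def oV (B : Set (Set X)) (f : Set X → ℝ) (c : Set X) : ℝ :=
  sInf (f '' {b | b ∈ B ∧ c ⊆ b})

variable {B : Set (Set X)} {f : Set X → ℝ}

lemma oV_set_nonempty (hp : IsPMOn B f) (c : Set X) :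
    (f '' {b | b ∈ B ∧ c ⊆ b}).Nonempty :=
  ⟨f Set.univ, Set.univ, ⟨hp.alg.univ_mem, Set.subset_univ c⟩, rfl⟩

lemma oV_set_bdd (hp : IsPMOn B f) (c : Set X) :
    BddBelow (f '' {b | b ∈ B ∧ c ⊆ b}) := by
  refine ⟨0, ?_⟩
  rintro r ⟨b, hb, rfl⟩
  exact hp.nonneg b hb.1

lemma oV_nonneg (hp : IsPMOn B f) (c : Set X) : 0 ≤ oV B f c := by
  apply le_csInf (oV_set_nonempty hp c)
  rintro r ⟨b, hb, rfl⟩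
  exact hp.nonneg b hb.1

lemma oV_le (hp : IsPMOn B f) {b c : Set X} (hb : b ∈ B) (hc : c ⊆ b) : oV B f c ≤ f b :=
  csInf_le (oV_set_bdd hp c) ⟨b, ⟨hb, hc⟩, rfl⟩

lemma le_oV (hp : IsPMOn B f) {c : Set X} {r : ℝ} (h : ∀ b ∈ B, c ⊆ b → r ≤ f b) :
    r ≤ oV B f c := by
  apply le_csInf (oV_set_nonempty hp c)
  rintro x ⟨b, hb, rfl⟩
  exact h b hb.1 hb.2

lemma oV_empty (hp : IsPMOn B f) : oV B f ∅ = 0 := by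
  refine le_antisymm ?_ (oV_nonneg hp ∅)
  have := oV_le hp hp.alg.empty_mem (Set.Subset.refl ∅)
  rwa [hp.f_empty] at this

/-- Additivity of the outer measure along traces on `s` of disjoint elements of `B`. -/
lemma oV_inter_add (hp : IsPMOn B f) {b b' : Set X} (hb : b ∈ B) (hb' : b' ∈ B)
    (hd : Disjoint b b') (s : Set X) :
    oV B f ((b ∪ b') ∩ s) = oV B f (b ∩ s) + oV B f (b' ∩ s) := by
  apply le_antisymm
  · have H : ∀ c ∈ B, b ∩ s ⊆ c → ∀ c' ∈ B, b' ∩ s ⊆ c' →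
        oV B f ((b ∪ b') ∩ s) ≤ f c + f c' := by
      intro c hc hbc c' hc' hbc'
      have hsub : (b ∪ b') ∩ s ⊆ c ∪ c' := by
        rintro x ⟨hx, hxs⟩
        rcases hx with hx | hx
        · exact Or.inl (hbc ⟨hx, hxs⟩)
        · exact Or.inr (hbc' ⟨hx, hxs⟩)
      exact le_trans (oV_le hp (hp.alg.union_mem hc hc') hsub) (hp.subadd hc hc')
    have h1 : oV B f ((b ∪ b') ∩ s) - oV B f (b ∩ s) ≤ oV B f (b' ∩ s) := by
      apply le_oV hp
      intro c' hc' hbc'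
      have h2 : oV B f ((b ∪ b') ∩ s) - f c' ≤ oV B f (b ∩ s) := by
        apply le_oV hp
        intro c hc hbc
        have := H c hc hbc c' hc' hbc'
        linarith
      linarith
    linarith
  · apply le_oV hp
    intro c hc hbc
    have h1 : f (c ∩ (b ∪ b')) = f (c ∩ b) + f (c ∩ b') := by
      rw [Set.inter_union_distrib_left]
      exact hp.add _ _ (hp.alg.inter_mem hc hb) (hp.alg.inter_mem hc hb')
        (hd.mono Set.inter_subset_right Set.inter_subset_right)
    have h2 : f (c ∩ (b ∪ b')) ≤ f c :=
      hp.mono (hp.alg.inter_mem hc (hp.alg.union_mem hb hb')) hc Set.inter_subset_left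
    have h3 : oV B f (b ∩ s) ≤ f (c ∩ b) := by
      apply oV_le hp (hp.alg.inter_mem hc hb)
      intro x hx
      exact ⟨hbc ⟨Or.inl hx.1, hx.2⟩, hx.1⟩
    have h4 : oV B f (b' ∩ s) ≤ f (c ∩ b') := by
      apply oV_le hp (hp.alg.inter_mem hc hb')
      intro x hx
      exact ⟨hbc ⟨Or.inr hx.1, hx.2⟩, hx.1⟩
    linarith

/-- The "inner part" `f b - oV (b ∩ s)` only depends on `b \ s`. -/
lemma sub_oV_congr (hp : IsPMOn B f) {s b b' : Set X} (hb : b ∈ B) (hb' : b' ∈ B)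
    (h : b \ s = b' \ s) : f b - oV B f (b ∩ s) = f b' - oV B f (b' ∩ s) := by
  have key : ∀ b b' : Set X, b ∈ B → b' ∈ B → b \ s = b' \ s →
      oV B f (b' ∩ s) ≤ f b' - f b + oV B f (b ∩ s) := by
    intro b b' hb hb' h
    have main : ∀ c ∈ B, b ∩ s ⊆ c → oV B f (b' ∩ s) ≤ f b' - f b + f c := by
      intro c hc hbc
      set c₂ := c ∩ b with hc₂def
      have hc₂ : c₂ ∈ B := hp.alg.inter_mem hc hb
      have hbc₂ : b ∩ s ⊆ c₂ := fun x hx => ⟨hbc hx, hx.1⟩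
      have hfc₂ : f c₂ ≤ f c := hp.mono hc₂ hc Set.inter_subset_left
      set c' := b' \ (b \ c₂) with hc'def
      have hc' : c' ∈ B := hp.alg.diff_mem hb' (hp.alg.diff_mem hb hc₂)
      have hbsc' : b' ∩ s ⊆ c' := by
        rintro x ⟨hxb', hxs⟩
        exact ⟨hxb', fun hx => hx.2 (hbc₂ ⟨hx.1, hxs⟩)⟩
      have hbc₂sub : b \ c₂ ⊆ b' := by
        intro x hx
        have hxs : x ∉ s := fun hxs => hx.2 (hbc₂ ⟨hx.1, hxs⟩)
        have : x ∈ b' \ s := h ▸ ⟨hx.1, hxs⟩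
        exact this.1
      have hdiff : b' \ c' = b \ c₂ := by
        ext x
        constructor
        · rintro ⟨hxb', hx⟩
          by_contra hxn
          exact hx ⟨hxb', hxn⟩
        · intro hx
          exact ⟨hbc₂sub hx, fun hy => hy.2 hx⟩
      have hub' : f b' = f c' + f (b \ c₂) := by
        have hdisj : Disjoint c' (b' \ c') := Set.disjoint_left.mpr fun x hx hx2 => hx2.2 hx
        have := hp.add c' (b' \ c') hc' (hp.alg.diff_mem hb' hc') hdisj
        rw [Set.union_diff_cancel Set.diff_subset] at this
        rw [this, hdiff]
      have hub : f b = f c₂ + f (b \ c₂) := by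
        have hdisj : Disjoint c₂ (b \ c₂) := Set.disjoint_left.mpr fun x hx hx2 => hx2.2 hx
        have := hp.add c₂ (b \ c₂) hc₂ (hp.alg.diff_mem hb hc₂) hdisj
        rw [Set.union_diff_cancel Set.inter_subset_right] at this
        exact this
      have h5 : oV B f (b' ∩ s) ≤ f c' := oV_le hp hc' hbsc'
      linarith
    have hfin : oV B f (b' ∩ s) - (f b' - f b) ≤ oV B f (b ∩ s) :=
      le_oV hp fun c hc hbc => by have := main c hc hbc; linarith
    linarith
  have h1 := key b b' hb hb' h
  have h2 := key b' b hb' hb h.symm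
  linarith

/-- The Boolean algebra generated by `B` together with one new set `s`. -/
def genE (B : Set (Set X)) (s : Set X) : Set (Set X) :=
  {c | ∃ b₁ b₂ : Set X, b₁ ∈ B ∧ b₂ ∈ B ∧ c = (b₁ ∩ s) ∪ (b₂ \ s)}

lemma subset_genE (hB : IsBoolAlg B) (s : Set X) : B ⊆ genE B s := by
  intro b hb
  exact ⟨b, b, hb, hb, by rw [Set.inter_union_diff]⟩

lemma mem_genE_self (hB : IsBoolAlg B) (s : Set X) : s ∈ genE B s :=
  ⟨Set.univ, ∅, hB.univ_mem, hB.empty_mem, by simp⟩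

lemma genE_alg (hB : IsBoolAlg B) (s : Set X) : IsBoolAlg (genE B s) := by
  refine ⟨subset_genE hB s hB.univ_mem, ?_, ?_⟩
  · rintro c ⟨b₁, b₂, hb₁, hb₂, rfl⟩
    refine ⟨b₁ᶜ, b₂ᶜ, hB.compl_mem hb₁, hB.compl_mem hb₂, ?_⟩
    ext x
    by_cases hx : x ∈ s <;>
      simp [Set.mem_union, Set.mem_diff, Set.mem_inter_iff, hx]
  · rintro c ⟨b₁, b₂, hb₁, hb₂, rfl⟩ c' ⟨b₁', b₂', hb₁', hb₂', rfl⟩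
    refine ⟨b₁ ∩ b₁', b₂ ∩ b₂', hB.inter_mem hb₁ hb₁', hB.inter_mem hb₂ hb₂', ?_⟩
    ext x
    by_cases hx : x ∈ s <;>
      simp [Set.mem_union, Set.mem_diff, Set.mem_inter_iff, hx] <;> tauto

lemma rep_inter {b₁ b₂ s c : Set X} (h : c = (b₁ ∩ s) ∪ (b₂ \ s)) : c ∩ s = b₁ ∩ s := by
  subst h
  ext x
  by_cases hx : x ∈ s <;> simp [Set.mem_inter_iff, Set.mem_union, Set.mem_diff, hx]

lemma rep_diff {b₁ b₂ s c : Set X} (h : c = (b₁ ∩ s) ∪ (b₂ \ s)) : c \ s = b₂ \ s := by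
  subst h
  ext x
  by_cases hx : x ∈ s <;> simp [Set.mem_diff, Set.mem_union, Set.mem_inter_iff, hx]

open scoped Classical in
/-- The canonical extension of `f` to the algebra generated by `B` and `s`, giving `s`
its outer measure. -/
noncomputable def Fv (B : Set (Set X)) (f : Set X → ℝ) (s : Set X) (c : Set X) : ℝ :=
  if hc : c ∈ genE B s then
    oV B f (c ∩ s) + (f hc.choose_spec.choose - oV B f (hc.choose_spec.choose ∩ s))
  else 0

lemma Fv_eq (hp : IsPMOn B f) {s c b₁ b₂ : Set X} (hb₁ : b₁ ∈ B) (hb₂ : b₂ ∈ B)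
    (h : c = (b₁ ∩ s) ∪ (b₂ \ s)) :
    Fv B f s c = oV B f (c ∩ s) + (f b₂ - oV B f (b₂ ∩ s)) := by
  have hc : c ∈ genE B s := ⟨b₁, b₂, hb₁, hb₂, h⟩
  rw [Fv, dif_pos hc]
  have spec := hc.choose_spec.choose_spec
  congr 1
  exact sub_oV_congr hp spec.2.1 hb₂ (by rw [← rep_diff spec.2.2, rep_diff h])

lemma Fv_of_mem (hp : IsPMOn B f) {s b : Set X} (hb : b ∈ B) : Fv B f s b = f b := by
  rw [Fv_eq hp hb hb (by rw [Set.inter_union_diff])]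
  ring

lemma Fv_self (hp : IsPMOn B f) (s : Set X) : Fv B f s s = oV B f s := by
  rw [Fv_eq hp hp.alg.univ_mem hp.alg.empty_mem (by simp), hp.f_empty, Set.empty_inter,
    oV_empty hp, Set.inter_self]
  ring

/-- One-step extension: `Fv` is a finitely additive probability measure on `genE B s`. -/
theorem onestep (hp : IsPMOn B f) (s : Set X) : IsPMOn (genE B s) (Fv B f s) := by
  refine ⟨genE_alg hp.alg s, ?_, ?_, ?_⟩
  · rintro c ⟨b₁, b₂, hb₁, hb₂, rfl⟩
    rw [Fv_eq hp hb₁ hb₂ rfl]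
    have h1 := oV_nonneg hp (((b₁ ∩ s) ∪ (b₂ \ s)) ∩ s)
    have h2 := oV_le hp hb₂ (Set.inter_subset_left (t := s))
    linarith
  · rw [Fv_of_mem hp hp.alg.univ_mem, hp.prob]
  · rintro c c' ⟨b₁, b₂, hb₁, hb₂, h⟩ ⟨b₁', b₂', hb₁', hb₂', h'⟩ hdisj
    have hcs := rep_inter h
    have hcd := rep_diff h
    have hcs' := rep_inter h'
    have hcd' := rep_diff h'
    have hd₁ : Disjoint (b₁ ∩ s) (b₁' ∩ s) := by
      rw [← hcs, ← hcs']
      exact hdisj.mono Set.inter_subset_left Set.inter_subset_left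
    have hd₂ : Disjoint (b₂ \ s) (b₂' \ s) := by
      rw [← hcd, ← hcd']
      exact hdisj.mono Set.diff_subset Set.diff_subset
    have hrep : c ∪ c' = ((b₁ ∪ b₁') ∩ s) ∪ ((b₂ ∪ b₂') \ s) := by
      rw [h, h']
      ext x
      by_cases hx : x ∈ s <;>
        simp [Set.mem_union, Set.mem_inter_iff, Set.mem_diff, hx] <;> tauto
    rw [Fv_eq hp (hp.alg.union_mem hb₁ hb₁') (hp.alg.union_mem hb₂ hb₂') hrep,
      Fv_eq hp hb₁ hb₂ h, Fv_eq hp hb₁' hb₂' h']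
    -- part (i): the `∩ s` part
    have e1 : (c ∪ c') ∩ s = (b₁ ∪ (b₁' \ b₁)) ∩ s := by
      rw [rep_inter hrep, Set.union_diff_self]
    have e2 : (b₁' \ b₁) ∩ s = b₁' ∩ s := by
      ext x
      constructor
      · rintro ⟨⟨h1, _⟩, h2⟩; exact ⟨h1, h2⟩
      · rintro ⟨h1, h2⟩
        refine ⟨⟨h1, fun hb => ?_⟩, h2⟩
        exact Set.disjoint_left.mp hd₁ ⟨hb, h2⟩ ⟨h1, h2⟩
    have i1 : oV B f ((c ∪ c') ∩ s) = oV B f (c ∩ s) + oV B f (c' ∩ s) := by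
      rw [e1, oV_inter_add hp hb₁ (hp.alg.diff_mem hb₁' hb₁)
        (Set.disjoint_left.mpr fun x hx hx2 => hx2.2 hx) s, e2, hcs, hcs']
    -- part (ii): the `\ s` part
    have e3 : (b₂' \ b₂) \ s = b₂' \ s := by
      ext x
      constructor
      · rintro ⟨⟨h1, _⟩, h2⟩; exact ⟨h1, h2⟩
      · rintro ⟨h1, h2⟩
        refine ⟨⟨h1, fun hb => ?_⟩, h2⟩
        exact Set.disjoint_left.mp hd₂ ⟨hb, h2⟩ ⟨h1, h2⟩
    have e4 : (b₂ ∪ b₂') \ s = (b₂ ∪ (b₂' \ b₂)) \ s := by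
      rw [Set.union_diff_self]
    have i2 : f (b₂ ∪ b₂') - oV B f ((b₂ ∪ b₂') ∩ s) =
        (f b₂ - oV B f (b₂ ∩ s)) + (f b₂' - oV B f (b₂' ∩ s)) := by
      have s1 := sub_oV_congr hp (hp.alg.union_mem hb₂ hb₂')
        (hp.alg.union_mem hb₂ (hp.alg.diff_mem hb₂' hb₂)) e4
      have s2 : f (b₂ ∪ (b₂' \ b₂)) = f b₂ + f (b₂' \ b₂) :=
        hp.add _ _ hb₂ (hp.alg.diff_mem hb₂' hb₂)
          (Set.disjoint_left.mpr fun x hx hx2 => hx2.2 hx)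
      have s3 := oV_inter_add hp hb₂ (hp.alg.diff_mem hb₂' hb₂)
        (Set.disjoint_left.mpr fun x hx hx2 => hx2.2 hx) s
      have s4 := sub_oV_congr hp (hp.alg.diff_mem hb₂' hb₂) hb₂' e3
      linarith
    linarith

/-! Extension of a finitely additive probability measure on an algebra to all sets,
via Zorn's lemma on graphs of partial measures. -/

/-- The domain of a graph of a partial measure. -/
def domG (G : Set (Set X × ℝ)) : Set (Set X) := {a | ∃ r, (a, r) ∈ G}

/-- A graph of a partial finitely additive probability measure. -/
def GG (G : Set (Set X × ℝ)) : Prop :=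
  (∀ a r r', (a, r) ∈ G → (a, r') ∈ G → r = r') ∧
  IsBoolAlg (domG G) ∧
  (∀ a r, (a, r) ∈ G → 0 ≤ r) ∧
  ((Set.univ, (1 : ℝ)) ∈ G) ∧
  (∀ a b r₁ r₂, (a, r₁) ∈ G → (b, r₂) ∈ G → Disjoint a b → (a ∪ b, r₁ + r₂) ∈ G)

/-- The graph of a measure on an algebra. -/
def graphOf (B : Set (Set X)) (f : Set X → ℝ) : Set (Set X × ℝ) :=
  {p | p.1 ∈ B ∧ p.2 = f p.1}

lemma domG_graphOf (B : Set (Set X)) (f : Set X → ℝ) : domG (graphOf B f) = B := by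
  ext a
  exact ⟨fun ⟨r, hr⟩ => hr.1, fun ha => ⟨f a, ha, rfl⟩⟩

lemma GG_graphOf {B : Set (Set X)} {f : Set X → ℝ} (hp : IsPMOn B f) :
    GG (graphOf B f) := by
  refine ⟨?_, ?_, ?_, ?_, ?_⟩
  · intro a r r' h h'
    exact h.2.trans h'.2.symm
  · rw [domG_graphOf]; exact hp.alg
  · intro a r h
    exact le_of_le_of_eq (hp.nonneg a h.1) h.2.symm
  · exact ⟨hp.alg.univ_mem, hp.prob.symm⟩
  · intro a b r₁ r₂ h₁ h₂ hd
    refine ⟨hp.alg.union_mem h₁.1 h₂.1, ?_⟩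
    show r₁ + r₂ = f (a ∪ b)
    rw [show r₁ = f a from h₁.2, show r₂ = f b from h₂.2]
    exact (hp.add a b h₁.1 h₂.1 hd).symm

/-- The value function of a graph. -/
noncomputable def valG (G : Set (Set X × ℝ)) : Set X → ℝ := fun a => sInf {r | (a, r) ∈ G}

lemma valG_eq {G : Set (Set X × ℝ)} (hfun : ∀ a r r', (a, r) ∈ G → (a, r') ∈ G → r = r')
    {a : Set X} {r : ℝ} (h : (a, r) ∈ G) : valG G a = r := by
  have : {r' | (a, r') ∈ G} = {r} := by
    ext r'
    exact ⟨fun h' => hfun a r' r h' h, fun h' => by rw [Set.mem_singleton_iff] at h'; rw [h']; exact h⟩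
  rw [valG, this, csInf_singleton]

lemma IsPMOn_of_GG {G : Set (Set X × ℝ)} (hG : GG G) : IsPMOn (domG G) (valG G) := by
  obtain ⟨hfun, halg, hnn, huniv, hadd⟩ := hG
  refine ⟨halg, ?_, ?_, ?_⟩
  · rintro a ⟨r, hr⟩
    rw [valG_eq hfun hr]
    exact hnn a r hr
  · exact valG_eq hfun huniv
  · rintro a b ⟨r₁, hr₁⟩ ⟨r₂, hr₂⟩ hd
    rw [valG_eq hfun hr₁, valG_eq hfun hr₂, valG_eq hfun (hadd a b r₁ r₂ hr₁ hr₂ hd)]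

/-- Any finitely additive probability measure on a Boolean algebra of subsets of `X`
extends to a finitely additive probability measure defined on all subsets of `X`. -/
theorem exists_total_extension {B : Set (Set X)} {f : Set X → ℝ} (hp : IsPMOn B f) :
    ∃ g : Set X → ℝ, (∀ b ∈ B, g b = f b) ∧ IsPMOn (Set.univ : Set (Set X)) g := by
  classical
  set S : Set (Set (Set X × ℝ)) := {G | GG G ∧ graphOf B f ⊆ G} with hS
  have hchain : ∀ c ⊆ S, IsChain (· ⊆ ·) c → c.Nonempty →
      ∃ ub ∈ S, ∀ s ∈ c, s ⊆ ub := by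
    intro c hc hch ⟨G₀, hG₀⟩
    have hdir := hch.directedOn
    refine ⟨⋃₀ c, ⟨⟨?_, ⟨?_, ?_, ?_⟩, ?_, ?_, ?_⟩, ?_⟩, fun s hs => Set.subset_sUnion_of_mem hs⟩
    · -- functional
      rintro a r r' hr hr'
      obtain ⟨G₁, hG₁, hrG₁⟩ := hr
      obtain ⟨G₂, hG₂, hrG₂⟩ := hr'
      obtain ⟨G₃, hG₃, h13, h23⟩ := hdir G₁ hG₁ G₂ hG₂
      exact (hc hG₃).1.1 a r r' (h13 hrG₁) (h23 hrG₂)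
    · -- univ mem dom
      exact ⟨1, Set.mem_sUnion.mpr ⟨G₀, hG₀, (hc hG₀).1.2.2.2.1⟩⟩
    · -- compl
      rintro a ⟨r, hr⟩
      obtain ⟨G₁, hG₁, hrG₁⟩ := hr
      obtain ⟨r', hr'⟩ := (hc hG₁).1.2.1.2.1 a ⟨r, hrG₁⟩
      exact ⟨r', Set.mem_sUnion.mpr ⟨G₁, hG₁, hr'⟩⟩
    · -- inter
      rintro a ⟨r, hr⟩ b ⟨r', hr'⟩
      obtain ⟨G₁, hG₁, hrG₁⟩ := hr
      obtain ⟨G₂, hG₂, hrG₂⟩ := hr'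
      obtain ⟨G₃, hG₃, h13, h23⟩ := hdir G₁ hG₁ G₂ hG₂
      obtain ⟨r'', hr''⟩ := (hc hG₃).1.2.1.2.2 a ⟨r, h13 hrG₁⟩ b ⟨r', h23 hrG₂⟩
      exact ⟨r'', Set.mem_sUnion.mpr ⟨G₃, hG₃, hr''⟩⟩
    · -- nonneg
      rintro a r hr
      obtain ⟨G₁, hG₁, hrG₁⟩ := hr
      exact (hc hG₁).1.2.2.1 a r hrG₁
    · -- univ ↦ 1
      exact Set.mem_sUnion.mpr ⟨G₀, hG₀, (hc hG₀).1.2.2.2.1⟩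
    · -- additive
      rintro a b r₁ r₂ hr₁ hr₂ hd
      obtain ⟨G₁, hG₁, hrG₁⟩ := hr₁
      obtain ⟨G₂, hG₂, hrG₂⟩ := hr₂
      obtain ⟨G₃, hG₃, h13, h23⟩ := hdir G₁ hG₁ G₂ hG₂
      exact Set.mem_sUnion.mpr ⟨G₃, hG₃, (hc hG₃).1.2.2.2.2 a b r₁ r₂ (h13 hrG₁) (h23 hrG₂) hd⟩
    · -- contains the base graph
      exact (hc hG₀).2.trans (Set.subset_sUnion_of_mem hG₀)
  obtain ⟨m, hsub, hmax⟩ :=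
    zorn_subset_nonempty S hchain (graphOf B f) ⟨GG_graphOf hp, Set.Subset.refl _⟩
  have hGG : GG m := hmax.prop.1
  have hpm := IsPMOn_of_GG hGG
  have htot : ∀ t : Set X, t ∈ domG m := by
    intro t
    by_contra ht
    have hone := onestep hpm t
    set G' := graphOf (genE (domG m) t) (Fv (domG m) (valG m) t) with hG'
    have hmG' : m ⊆ G' := by
      rintro ⟨a, r⟩ hp'
      have hadom : a ∈ domG m := ⟨r, hp'⟩
      exact ⟨subset_genE hGG.2.1 t hadom,
        ((valG_eq hGG.1 hp').symm.trans (Fv_of_mem hpm hadom).symm)⟩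
    have hG'S : G' ∈ S := ⟨GG_graphOf hone, hsub.trans hmG'⟩
    have hG'm : G' ⊆ m := hmax.2 hG'S hmG'
    exact ht ⟨Fv (domG m) (valG m) t t, hG'm ⟨mem_genE_self hGG.2.1 t, rfl⟩⟩
  refine ⟨valG m, ?_, ?_⟩
  · intro b hb
    exact valG_eq hGG.1 (hsub ⟨hb, rfl⟩)
  · have hdom : domG m = (Set.univ : Set (Set X)) := Set.eq_univ_of_forall htot
    rw [hdom] at hpm
    exact hpm

/-- Extension with prescribed (outer) value at one prescribed set. -/
theorem exists_total_extension_outer {B : Set (Set X)} {f : Set X → ℝ} (hp : IsPMOn B f)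
    (s : Set X) :
    ∃ g : Set X → ℝ, (∀ b ∈ B, g b = f b) ∧ IsPMOn (Set.univ : Set (Set X)) g ∧
      g s = oV B f s := by
  obtain ⟨g, hg, hgpm⟩ := exists_total_extension (onestep hp s)
  exact ⟨g, fun b hb => (hg b (subset_genE hp.alg s hb)).trans (Fv_of_mem hp hb), hgpm,
    (hg s (mem_genE_self hp.alg s)).trans (Fv_self hp s)⟩


end AuxExtension

/-- Let `Δ` be a Boolean algebra of formulas in the variable `x` and
`μ` a global `Δ`-measure smooth over a small model `M`.  Then every `φ(x) ∈ Δ(𝒰)` can be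
approximated, up to any `ε > 0` in `μ`-measure, from inside and outside by formulas
`θ⁻(x), θ⁺(x) ∈ Δ(M)`. -/
theorem statement_13
    (L : FirstOrder.Language.{u, u}) (U : Type u) [L.Structure U]
    (κ : Cardinal.{u}) (hMon : IsMonster L U κ)
    (α : Type u) (Δ : ∀ m : ℕ, Set (L.Formula (α ⊕ Fin m)))
    (halg : ∀ A : Set U, IsBoolAlg (DeltaSet L Δ A))
    (Mset : Set U) (hM : IsElemSubset L U Mset) (hMsmall : SmallSet L κ Mset)
    (μ : FAM (α → U) (DeltaSet L Δ (Set.univ : Set U)))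
    (hsm : SmoothOn (DeltaSet L Δ Mset) (DeltaSet L Δ (Set.univ : Set U)) μ.val) :
    ∀ s ∈ DeltaSet L Δ (Set.univ : Set U), ∀ ε : ℝ, 0 < ε →
      ∃ t₁ t₂ : Set (α → U), t₁ ∈ DeltaSet L Δ Mset ∧ t₂ ∈ DeltaSet L Δ Mset ∧
        t₁ ⊆ s ∧ s ⊆ t₂ ∧ μ.val t₂ - μ.val t₁ < ε := by
  intro s hs ε hε
  have hsub : (DeltaSet L Δ Mset) ⊆ (DeltaSet L Δ (Set.univ : Set U)) := by
    rintro t ⟨m, φ, b, hφ, hb, rfl⟩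
    exact ⟨m, φ, b, hφ, fun j => Set.mem_univ _, rfl⟩
  have hpm : IsPMOn (DeltaSet L Δ Mset) μ.val :=
    { alg := halg Mset
      nonneg := fun b hb => μ.nonneg b (hsub hb)
      prob := μ.isProb
      add := fun a b ha hb hd => μ.additive a b (hsub ha) (hsub hb) hd }
  -- smoothness forces the measure of every global `Δ`-set to equal its outer measure
  -- computed from `Δ(M)`-sets
  have key : ∀ c ∈ (DeltaSet L Δ (Set.univ : Set U)), μ.val c = oV (DeltaSet L Δ Mset) μ.val c := by
    intro c hc
    obtain ⟨g, hg, hgpm, hgs⟩ := exists_total_extension_outer hpm c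
    let ν : FAM (α → U) (DeltaSet L Δ (Set.univ : Set U)) :=
      { val := g
        nonneg := fun t _ => hgpm.nonneg t (Set.mem_univ t)
        isProb := hgpm.prob
        additive := fun a b _ _ hd => hgpm.add a b (Set.mem_univ a) (Set.mem_univ b) hd }
    have hagree : agreeOn (DeltaSet L Δ Mset) ν.val μ.val := fun t ht => hg t ht
    have h2 := hsm.2 ν μ hagree (fun t _ => rfl) c hc
    exact h2.symm.trans hgs
  have hscD : sᶜ ∈ (DeltaSet L Δ (Set.univ : Set U)) := (halg (Set.univ : Set U)).2.1 s hs
  have h1 : μ.val s = oV (DeltaSet L Δ Mset) μ.val s := key s hs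
  have h2 : μ.val sᶜ = oV (DeltaSet L Δ Mset) μ.val sᶜ := key sᶜ hscD
  have hsum : μ.val s + μ.val sᶜ = 1 := by
    have h := μ.additive s sᶜ hs hscD disjoint_compl_right
    rw [Set.union_compl_self, μ.isProb] at h
    linarith
  -- outer approximation of `s`
  have hout : ∃ t₂ ∈ (DeltaSet L Δ Mset), s ⊆ t₂ ∧ μ.val t₂ < μ.val s + ε / 2 := by
    have hlt : sInf (μ.val '' {b | b ∈ (DeltaSet L Δ Mset) ∧ s ⊆ b}) < μ.val s + ε / 2 := by
      have : oV (DeltaSet L Δ Mset) μ.val s < μ.val s + ε / 2 := by rw [← h1]; linarith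
      exact this
    obtain ⟨y, ⟨b, hb, rfl⟩, hy⟩ := exists_lt_of_csInf_lt (oV_set_nonempty hpm s) hlt
    exact ⟨b, hb.1, hb.2, hy⟩
  -- outer approximation of `sᶜ`
  have hin : ∃ t' ∈ (DeltaSet L Δ Mset), sᶜ ⊆ t' ∧ μ.val t' < μ.val sᶜ + ε / 2 := by
    have hlt : sInf (μ.val '' {b | b ∈ (DeltaSet L Δ Mset) ∧ sᶜ ⊆ b}) < μ.val sᶜ + ε / 2 := by
      have : oV (DeltaSet L Δ Mset) μ.val sᶜ < μ.val sᶜ + ε / 2 := by rw [← h2]; linarith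
      exact this
    obtain ⟨y, ⟨b, hb, rfl⟩, hy⟩ := exists_lt_of_csInf_lt (oV_set_nonempty hpm sᶜ) hlt
    exact ⟨b, hb.1, hb.2, hy⟩
  obtain ⟨t₂, ht₂, hst₂, ht₂val⟩ := hout
  obtain ⟨t', ht', hst', ht'val⟩ := hin
  refine ⟨t'ᶜ, t₂, (halg Mset).2.1 t' ht', ht₂, ?_, hst₂, ?_⟩
  · intro x hx
    by_contra hxs
    exact hx (hst' hxs)
  · have ht'sum : μ.val t' + μ.val t'ᶜ = 1 := by
      have h := μ.additive t' t'ᶜ (hsub ht') ((halg (Set.univ : Set U)).2.1 t' (hsub ht'))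
        disjoint_compl_right
      rw [Set.union_compl_self, μ.isProb] at h
      linarith
    linarith

end KeislerPaper
end
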